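/- arXiv:0809.2374 — 10 statements merged into one kernel-verified Lean document; each statement's English description precedes it below -/
import Mathlib

section
/- u ≤ w in Bruhat order on S_n if and only if r_u(p,q) ≥ r_w(p,q) for all (p,q) in the coessential set Coess(w) = {(p,q) | w(p) ≤ q < w(p+1) and w^{-1}(q) ≤ p < w^{-1}(q+1)}. -/
open Equiv

/-- 1-indexed rank function: r_w(p,q) = #{i | 1 ≤ i ≤ p, 1 ≤ w(i) ≤ q}. -/
def rank {n : ℕ} (w : Equiv.Perm (Fin n)) (p q : ℕ) : ℕ :=
  (Finset.univ.filter fun i : Fin n => (i : ℕ) + 1 ≤ p ∧ (w i : ℕ) + 1 ≤ q).card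

/-- 1-indexed value of the permutation: pval w p = w(p) for 1 ≤ p ≤ n. -/
def pval {n : ℕ} (w : Equiv.Perm (Fin n)) (p : ℕ) : ℕ :=
  if h : 1 ≤ p ∧ p ≤ n then (w ⟨p - 1, by omega⟩ : ℕ) + 1 else 0

/-- Coessential set (1-indexed): w(p) ≤ q < w(p+1), w⁻¹(q) ≤ p < w⁻¹(q+1). -/
def Coess {n : ℕ} (w : Equiv.Perm (Fin n)) (p q : ℕ) : Prop :=
  1 ≤ p ∧ p + 1 ≤ n ∧ 1 ≤ q ∧ q + 1 ≤ n ∧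
  pval w p ≤ q ∧ q < pval w (p + 1) ∧ pval w⁻¹ q ≤ p ∧ p < pval w⁻¹ (q + 1)

/-- Coxeter length = number of inversions. -/
def len {n : ℕ} (w : Equiv.Perm (Fin n)) : ℕ :=
  (Finset.univ.filter fun ij : Fin n × Fin n => ij.1 < ij.2 ∧ w ij.2 < w ij.1).card

/-- Bruhat order on Sₙ: reflexive-transitive closure of length-increasing
multiplication by a transposition. -/
def BruhatLE {n : ℕ} (u w : Equiv.Perm (Fin n)) : Prop :=
  Relation.ReflTransGen
    (fun x y => (∃ a b : Fin n, a ≠ b ∧ y = x * Equiv.swap a b) ∧ len y = len x + 1) u w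

/-- w contains the pattern given (in one-line notation) by the list σ. -/
def ContainsPat {n : ℕ} (w : Equiv.Perm (Fin n)) (σ : List ℕ) : Prop :=
  ∃ f : Fin σ.length → Fin n, StrictMono f ∧
    ∀ j k : Fin σ.length, σ.get j < σ.get k ↔ w (f j) < w (f k)

/-- Pattern embedding of one permutation into another. -/
def ContainsPerm {m n : ℕ} (v : Equiv.Perm (Fin m)) (w : Equiv.Perm (Fin n)) : Prop :=
  ∃ f : Fin m → Fin n, StrictMono f ∧ ∀ j k, v j < v k ↔ w (f j) < w (f k)

/-- A 3412 embedding: i < j < k < m with w(k) < w(m) < w(i) < w(j). -/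
def Emb3412 {n : ℕ} (w : Equiv.Perm (Fin n)) (i j k m : Fin n) : Prop :=
  i < j ∧ j < k ∧ k < m ∧ w k < w m ∧ w m < w i ∧ w i < w j

/-- Height of a 3412 embedding: w(i) − w(m). -/
def hgt {n : ℕ} (w : Equiv.Perm (Fin n)) (i m : Fin n) : ℕ := (w i : ℕ) - (w m : ℕ)

/-- Amplitude of a 3412 embedding: w(j) − w(k). -/
def amp {n : ℕ} (w : Equiv.Perm (Fin n)) (j k : Fin n) : ℕ := (w j : ℕ) - (w k : ℕ)

/-- A 3412 embedding of minimal height among all 3412 embeddings of w. -/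
def MinHt {n : ℕ} (w : Equiv.Perm (Fin n)) (i j k m : Fin n) : Prop :=
  Emb3412 w i j k m ∧
  ∀ i' j' k' m', Emb3412 w i' j' k' m' → hgt w i m ≤ hgt w i' m'

/-- A 3412 embedding of minimal height, and of minimal amplitude among those
of minimal height. -/
def MinHtAmp {n : ℕ} (w : Equiv.Perm (Fin n)) (i j k m : Fin n) : Prop :=
  MinHt w i j k m ∧
  ∀ i' j' k' m', Emb3412 w i' j' k' m' → hgt w i' m' = hgt w i m →
    amp w j k ≤ amp w j' k'

/-- A critical 3412 embedding: the four critical regions contain no point of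
the graph of w. -/
def Critical {n : ℕ} (w : Equiv.Perm (Fin n)) (i j k m : Fin n) : Prop :=
  Emb3412 w i j k m ∧
  (∀ p, i < p → p < j → ¬(w m < w p ∧ w p < w i)) ∧
  (∀ p, j < p → p < k → ¬(w i < w p ∧ w p < w j)) ∧
  (∀ p, k < p → p < m → ¬(w m < w p ∧ w p < w i)) ∧
  (∀ p, j < p → p < k → ¬(w k < w p ∧ w p < w m))

/-- A reduced critical 3412 embedding: w is decreasing on the region B. -/
def ReducedCrit {n : ℕ} (w : Equiv.Perm (Fin n)) (i j k m : Fin n) : Prop :=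
  Critical w i j k m ∧
  ∀ b1 b2, j < b1 → b1 < b2 → b2 < k →
    w m < w b1 → w b1 < w i → w m < w b2 → w b2 < w i → w b2 < w b1

lemma rank_succ_left {n : ℕ} (w : Equiv.Perm (Fin n)) (p q : ℕ) (hp : p < n) :
    rank w (p+1) q = rank w p q + (if (w ⟨p, hp⟩ : ℕ) + 1 ≤ q then 1 else 0) := by
  unfold rank
  rw [Finset.card_filter, Finset.card_filter]
  have key : ∀ i : Fin n,
      (if (i:ℕ)+1 ≤ p+1 ∧ (w i:ℕ)+1 ≤ q then 1 else 0)
      = (if (i:ℕ)+1 ≤ p ∧ (w i:ℕ)+1 ≤ q then 1 else 0)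
        + (if i = ⟨p,hp⟩ then (if (w i:ℕ)+1 ≤ q then 1 else 0) else 0) := by
    intro i
    by_cases hi : i = (⟨p, hp⟩ : Fin n)
    · subst hi
      have hval : ((⟨p,hp⟩ : Fin n) : ℕ) = p := rfl
      simp only [if_pos rfl]
      split_ifs <;> omega
    · have hv : (i:ℕ) ≠ p := fun hc => hi (Fin.ext hc)
      simp only [if_neg hi, add_zero]
      split_ifs <;> omega
  rw [Finset.sum_congr rfl (fun i _ => key i), Finset.sum_add_distrib,
    Finset.sum_ite_eq' Finset.univ (⟨p,hp⟩ : Fin n) (fun i => if (w i:ℕ)+1 ≤ q then 1 else 0)]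
  simp

lemma rank_succ_right {n : ℕ} (w : Equiv.Perm (Fin n)) (p q : ℕ) (hq : q < n) :
    rank w p (q+1) = rank w p q + (if (w⁻¹ ⟨q, hq⟩ : ℕ) + 1 ≤ p then 1 else 0) := by
  unfold rank
  rw [Finset.card_filter, Finset.card_filter]
  have key : ∀ i : Fin n,
      (if (i:ℕ)+1 ≤ p ∧ (w i:ℕ)+1 ≤ q+1 then 1 else 0)
      = (if (i:ℕ)+1 ≤ p ∧ (w i:ℕ)+1 ≤ q then 1 else 0)
        + (if i = w⁻¹ ⟨q,hq⟩ then (if (i:ℕ)+1 ≤ p then 1 else 0) else 0) := by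
    intro i
    by_cases hi : i = w⁻¹ (⟨q, hq⟩ : Fin n)
    · subst hi
      have hw : (w (w⁻¹ (⟨q,hq⟩ : Fin n)) : ℕ) = q := by simp
      simp only [if_pos rfl]
      split_ifs <;> omega
    · have hv : (w i:ℕ) ≠ q := by
        intro hc
        apply hi
        have h2 : w i = (⟨q,hq⟩ : Fin n) := Fin.ext hc
        rw [← h2, Equiv.Perm.inv_def, Equiv.symm_apply_apply]
      simp only [if_neg hi, add_zero]
      split_ifs <;> omega
  rw [Finset.sum_congr rfl (fun i _ => key i), Finset.sum_add_distrib,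
    Finset.sum_ite_eq' Finset.univ (w⁻¹ (⟨q,hq⟩ : Fin n)) (fun i => if (i:ℕ)+1 ≤ p then 1 else 0)]
  simp

lemma rank_le_left {n : ℕ} (w : Equiv.Perm (Fin n)) (p q : ℕ) : rank w p q ≤ p := by
  unfold rank
  calc (Finset.univ.filter fun i : Fin n => (i : ℕ) + 1 ≤ p ∧ (w i : ℕ) + 1 ≤ q).card
      ≤ (Finset.range p).card := by
        refine Finset.card_le_card_of_injOn (fun i => (i:ℕ)) ?_ ?_
        · intro i hi; simp at hi ⊢; omega
        · intro a _ b _ hab; exact Fin.ext hab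
    _ = p := Finset.card_range p

lemma rank_le_right {n : ℕ} (w : Equiv.Perm (Fin n)) (p q : ℕ) : rank w p q ≤ q := by
  unfold rank
  calc (Finset.univ.filter fun i : Fin n => (i : ℕ) + 1 ≤ p ∧ (w i : ℕ) + 1 ≤ q).card
      ≤ (Finset.range q).card := by
        refine Finset.card_le_card_of_injOn (fun i => (w i:ℕ)) ?_ ?_
        · intro i hi; simp at hi ⊢; omega
        · intro a _ b _ hab; exact w.injective (Fin.ext hab)
    _ = q := Finset.card_range q

lemma rank_zero_left {n : ℕ} (w : Equiv.Perm (Fin n)) (q : ℕ) : rank w 0 q = 0 := by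
  simp [rank]

lemma rank_zero_right {n : ℕ} (w : Equiv.Perm (Fin n)) (p : ℕ) : rank w p 0 = 0 := by
  simp [rank]

lemma rank_top_left {n : ℕ} (w : Equiv.Perm (Fin n)) (q : ℕ) (hq : q ≤ n) :
    rank w n q = q := by
  induction q with
  | zero => exact rank_zero_right w n
  | succ q ih =>
    have hq' : q < n := by omega
    rw [rank_succ_right w n q hq', ih (by omega), if_pos (by exact (w⁻¹ ⟨q, hq'⟩).isLt)]

lemma rank_top_right {n : ℕ} (w : Equiv.Perm (Fin n)) (p : ℕ) (hp : p ≤ n) :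
    rank w p n = p := by
  induction p with
  | zero => exact rank_zero_left w n
  | succ p ih =>
    have hp' : p < n := by omega
    rw [rank_succ_left w p n hp', ih (by omega), if_pos (by exact (w ⟨p, hp'⟩).isLt)]

lemma pval_eq {n : ℕ} (w : Equiv.Perm (Fin n)) (p : ℕ) (h1 : 1 ≤ p) (h2 : p ≤ n) :
    pval w p = (w ⟨p - 1, by omega⟩ : ℕ) + 1 := by
  rw [pval, dif_pos ⟨h1, h2⟩]

lemma coess_suffices {n : ℕ} (u w : Equiv.Perm (Fin n))
    (h : ∀ p q, Coess w p q → rank w p q ≤ rank u p q) :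
    ∀ Φ p q : ℕ, 1 ≤ p → p ≤ n → 1 ≤ q → q ≤ n → p + q ≤ 2 * rank w p q + Φ →
      rank w p q ≤ rank u p q := by
  intro Φ
  induction Φ using Nat.strong_induction_on with
  | _ Φ IH =>
  intro p q hp1 hpn hq1 hqn hΦ
  by_cases hpn' : p = n
  · subst hpn'; rw [rank_top_left w q hqn, rank_top_left u q hqn]
  by_cases hqn' : q = n
  · subst hqn'; rw [rank_top_right w p hpn, rank_top_right u p hpn]
  have hpn2 : p < n := lt_of_le_of_ne hpn hpn'
  have hqn2 : q < n := lt_of_le_of_ne hqn hqn'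
  have hrp := rank_le_left w p q
  have hrq := rank_le_right w p q
  by_cases h1 : pval w p ≤ q
  · by_cases h2 : q < pval w (p+1)
    · by_cases h3 : pval (w⁻¹) q ≤ p
      · by_cases h4 : p < pval (w⁻¹) (q+1)
        · exact h p q ⟨hp1, by omega, hq1, by omega, h1, h2, h3, h4⟩
        · -- reduce to (p, q+1)
          push_neg at h4
          rw [pval_eq (w⁻¹) (q+1) (by omega) (by omega)] at h4
          have e1 := rank_succ_right w p q hqn2
          have e2 := rank_succ_right u p q hqn2
          rw [if_pos (show (w⁻¹ (⟨q, hqn2⟩ : Fin n) : ℕ) + 1 ≤ p by exact h4)] at e1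
          have hb : rank w p (q+1) ≤ p := rank_le_left w p (q+1)
          have hΦ1 : 1 ≤ Φ := by omega
          have hIH := IH (Φ-1) (by omega) p (q+1) hp1 hpn (by omega) (by omega) (by omega)
          split_ifs at e2 <;> omega
      · -- reduce to (p, q-1)
        push_neg at h3
        rw [pval_eq (w⁻¹) q hq1 hqn] at h3
        obtain ⟨q', rfl⟩ : ∃ q', q = q' + 1 := ⟨q - 1, by omega⟩
        have hq'n : q' < n := by omega
        have e1 := rank_succ_right w p q' hq'n
        have e2 := rank_succ_right u p q' hq'n
        rw [if_neg (by simpa using h3)] at e1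
        by_cases hq0 : q' = 0
        · subst hq0; rw [e1, rank_zero_right]; omega
        have hrq' := rank_le_right w p q'
        have hΦ1 : 1 ≤ Φ := by omega
        have hIH := IH (Φ-1) (by omega) p q' hp1 hpn (by omega) (by omega) (by omega)
        split_ifs at e2 <;> omega
    · -- reduce to (p+1, q)
      push_neg at h2
      rw [pval_eq w (p+1) (by omega) (by omega)] at h2
      have e1 := rank_succ_left w p q hpn2
      have e2 := rank_succ_left u p q hpn2
      rw [if_pos (by simpa using h2)] at e1
      have hb : rank w (p+1) q ≤ q := rank_le_right w (p+1) q
      have hΦ1 : 1 ≤ Φ := by omega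
      have hIH := IH (Φ-1) (by omega) (p+1) q (by omega) (by omega) hq1 hqn (by omega)
      split_ifs at e2 <;> omega
  · -- reduce to (p-1, q)
    push_neg at h1
    rw [pval_eq w p hp1 hpn] at h1
    obtain ⟨p', rfl⟩ : ∃ p', p = p' + 1 := ⟨p - 1, by omega⟩
    have hp'n : p' < n := by omega
    have e1 := rank_succ_left w p' q hp'n
    have e2 := rank_succ_left u p' q hp'n
    rw [if_neg (by simpa using h1)] at e1
    by_cases hp0 : p' = 0
    · subst hp0; rw [e1, rank_zero_left]; omega
    have hrp' := rank_le_left w p' q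
    have hΦ1 : 1 ≤ Φ := by omega
    have hIH := IH (Φ-1) (by omega) p' q (by omega) (by omega) hq1 hqn (by omega)
    split_ifs at e2 <;> omega

/-- u ≤ w in Bruhat order (rank formulation) iff r_u ≥ r_w on the coessential set. -/
theorem stmt2 {n : ℕ} (u w : Equiv.Perm (Fin n)) :
    (∀ p q : ℕ, 1 ≤ p → p ≤ n → 1 ≤ q → q ≤ n → rank w p q ≤ rank u p q) ↔
      (∀ p q : ℕ, Coess w p q → rank w p q ≤ rank u p q) := by
  constructor
  · intro h p q hc
    obtain ⟨hp1, hpn, hq1, hqn, _⟩ := hc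
    exact h p q hp1 (by omega) hq1 (by omega)
  · intro h p q hp1 hpn hq1 hqn
    exact coess_suffices u w h (p + q) p q hp1 hpn hq1 hqn (by omega)
end

section
/- Suppose w ∈ S_n avoids the patterns 3412 and 653421, and let (p,q) be an element of the coessential set of w with r = r_w(p,q) < min{p,q} (i.e., (p,q) is not an inclusion element). Then min{p,q} = r + 1. -/
open Equiv

lemma pat3412 {n : ℕ} (w : Equiv.Perm (Fin n)) (i j k m : Fin n)
    (hij : (i:ℕ) < j) (hjk : (j:ℕ) < k) (hkm : (k:ℕ) < m)
    (h1 : (w k:ℕ) < w m) (h2 : (w m:ℕ) < w i) (h3 : (w i:ℕ) < w j) :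
    ContainsPat w [3,4,1,2] := by
  refine ⟨fun a => if a.val = 0 then i else if a.val = 1 then j else if a.val = 2 then k else m,
    ?_, ?_⟩
  · intro a b hab
    have ha : a.val < 4 := a.isLt
    have hb : b.val < 4 := b.isLt
    have hab' : a.val < b.val := hab
    show (_ : Fin n).val < _
    interval_cases h1 : a.val <;> interval_cases h2 : b.val <;> simp_all <;> omega
  · intro a b
    have ha : a.val < 4 := a.isLt
    have hb : b.val < 4 := b.isLt
    have hab : ([3,4,1,2].get a < [3,4,1,2].get b) =
        ([3,4,1,2].get ⟨a.val, ha⟩ < [3,4,1,2].get ⟨b.val, hb⟩) := rfl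
    rw [show (w _ < w _) ↔ ((w _ : Fin n).val < (w _ : Fin n).val) from Iff.rfl]
    rw [hab]
    interval_cases h1 : a.val <;> interval_cases h2 : b.val <;> simp_all [List.get] <;> omega

lemma pat653421 {n : ℕ} (w : Equiv.Perm (Fin n)) (x1 x2 x3 x4 x5 x6 : Fin n)
    (p12 : (x1:ℕ) < x2) (p23 : (x2:ℕ) < x3) (p34 : (x3:ℕ) < x4)
    (p45 : (x4:ℕ) < x5) (p56 : (x5:ℕ) < x6)
    (v65 : (w x6:ℕ) < w x5) (v53 : (w x5:ℕ) < w x3) (v34 : (w x3:ℕ) < w x4)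
    (v42 : (w x4:ℕ) < w x2) (v21 : (w x2:ℕ) < w x1) :
    ContainsPat w [6,5,3,4,2,1] := by
  refine ⟨fun a => if a.val = 0 then x1 else if a.val = 1 then x2 else if a.val = 2 then x3
      else if a.val = 3 then x4 else if a.val = 4 then x5 else x6, ?_, ?_⟩
  · intro a b hab
    have ha : a.val < 6 := a.isLt
    have hb : b.val < 6 := b.isLt
    have hab' : a.val < b.val := hab
    show (_ : Fin n).val < _
    interval_cases h1 : a.val <;> interval_cases h2 : b.val <;> simp_all <;> omega
  · intro a b
    have ha : a.val < 6 := a.isLt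
    have hb : b.val < 6 := b.isLt
    have hab : ([6,5,3,4,2,1].get a < [6,5,3,4,2,1].get b) =
        ([6,5,3,4,2,1].get ⟨a.val, ha⟩ < [6,5,3,4,2,1].get ⟨b.val, hb⟩) := rfl
    rw [show (w _ < w _) ↔ ((w _ : Fin n).val < (w _ : Fin n).val) from Iff.rfl]
    rw [hab]
    interval_cases h1 : a.val <;> interval_cases h2 : b.val <;> simp_all [List.get] <;> omega

/-- If w avoids 3412 and 653421 and (p,q) ∈ Coess(w) is not an inclusion element,
then min{p,q} = r_w(p,q) + 1. -/
theorem stmt4 {n : ℕ} (w : Equiv.Perm (Fin n))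
    (h1 : ¬ ContainsPat w [3, 4, 1, 2]) (h2 : ¬ ContainsPat w [6, 5, 3, 4, 2, 1])
    (p q : ℕ) (hc : Coess w p q) (hr : rank w p q < min p q) :
    min p q = rank w p q + 1 := by
  obtain ⟨hp1, hpn, hq1, hqn, hwp, hwp1, hwq, hwq1⟩ := hc
  by_contra hcon
  have hmin : rank w p q + 2 ≤ min p q := by omega
  have hp2 : rank w p q + 2 ≤ p := by omega
  have hq2 : rank w p q + 2 ≤ q := by omega
  have hplt : p < n := by omega
  have hqlt : q < n := by omega
  -- special points
  rw [pval, dif_pos ⟨hp1, by omega⟩] at hwp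
  rw [pval, dif_pos ⟨by omega, by omega⟩] at hwp1
  rw [pval, dif_pos ⟨hq1, by omega⟩] at hwq
  rw [pval, dif_pos ⟨by omega, by omega⟩] at hwq1
  obtain ⟨P0, hP0v, hS⟩ : ∃ x : Fin n, (x:ℕ) = p - 1 ∧ (w x : ℕ) + 1 ≤ q :=
    ⟨⟨p - 1, by omega⟩, rfl, hwp⟩
  obtain ⟨P1, hP1v, hT⟩ : ∃ x : Fin n, (x:ℕ) = p ∧ q < (w x : ℕ) + 1 :=
    ⟨⟨p, hplt⟩, rfl, hwp1⟩
  obtain ⟨z, hvz, hzp⟩ : ∃ x : Fin n, (w x : ℕ) = q - 1 ∧ (x:ℕ) + 1 ≤ p :=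
    ⟨w⁻¹ ⟨q - 1, by omega⟩, by simp, hwq⟩
  obtain ⟨y, hvy, hyp⟩ : ∃ x : Fin n, (w x : ℕ) = q ∧ p < (x:ℕ) + 1 :=
    ⟨w⁻¹ ⟨q, hqlt⟩, by simp, hwq1⟩
  have hinj : ∀ x u : Fin n, (x:ℕ) ≠ (u:ℕ) → (w x:ℕ) ≠ (w u:ℕ) := by
    intro x u hxu h
    exact hxu (congrArg Fin.val (w.injective (Fin.val_injective h)))
  have hposinj : ∀ x u : Fin n, (x:ℕ) = (u:ℕ) → (w x:ℕ) = (w u:ℕ) := by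
    intro x u hxu
    rw [Fin.val_injective hxu]
  -- counting
  have hcard1 : (Finset.univ.filter fun i : Fin n => (i:ℕ)+1 ≤ p).card = p := by
    have e : (Finset.univ.filter fun i : Fin n => (i:ℕ)+1 ≤ p) =
        Finset.Iio (⟨p, hplt⟩ : Fin n) := by
      ext i; simp [Fin.lt_def]
    rw [e, Fin.card_Iio]
  have hcard1q : (Finset.univ.filter fun v : Fin n => (v:ℕ)+1 ≤ q).card = q := by
    have e : (Finset.univ.filter fun v : Fin n => (v:ℕ)+1 ≤ q) =
        Finset.Iio (⟨q, hqlt⟩ : Fin n) := by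
      ext i; simp [Fin.lt_def]
    rw [e, Fin.card_Iio]
  have hcard2 : (Finset.univ.filter fun i : Fin n => (w i:ℕ)+1 ≤ q).card = q := by
    have e : (Finset.univ.filter fun i : Fin n => (w i:ℕ)+1 ≤ q).card =
        (Finset.univ.filter fun v : Fin n => (v:ℕ)+1 ≤ q).card :=
      Finset.card_nbij' (fun i => w i) (fun v => w⁻¹ v) (by intro x hx; simpa using hx)
        (by intro x hx; simpa using hx) (by intro x hx; simp) (by intro x hx; simp)
    rw [e, hcard1q]
  have hsplitA : (Finset.univ.filter fun i : Fin n =>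
        ((i:ℕ)+1 ≤ p) ∧ ((w i:ℕ)+1 ≤ q)).card +
      (Finset.univ.filter fun i : Fin n => ((i:ℕ)+1 ≤ p) ∧ ¬((w i:ℕ)+1 ≤ q)).card = p := by
    have e : (Finset.univ.filter fun i : Fin n =>
          ((i:ℕ)+1 ≤ p) ∧ ((w i:ℕ)+1 ≤ q)).card +
        (Finset.univ.filter fun i : Fin n => ((i:ℕ)+1 ≤ p) ∧ ¬((w i:ℕ)+1 ≤ q)).card =
        (Finset.univ.filter fun i : Fin n => (i:ℕ)+1 ≤ p).card := by
      rw [← Finset.filter_filter, ← Finset.filter_filter]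
      exact Finset.card_filter_add_card_filter_not _
    rw [e, hcard1]
  have hsplitC : (Finset.univ.filter fun i : Fin n =>
        ((w i:ℕ)+1 ≤ q) ∧ ((i:ℕ)+1 ≤ p)).card +
      (Finset.univ.filter fun i : Fin n => ((w i:ℕ)+1 ≤ q) ∧ ¬((i:ℕ)+1 ≤ p)).card = q := by
    have e : (Finset.univ.filter fun i : Fin n =>
          ((w i:ℕ)+1 ≤ q) ∧ ((i:ℕ)+1 ≤ p)).card +
        (Finset.univ.filter fun i : Fin n => ((w i:ℕ)+1 ≤ q) ∧ ¬((i:ℕ)+1 ≤ p)).card =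
        (Finset.univ.filter fun i : Fin n => (w i:ℕ)+1 ≤ q).card := by
      rw [← Finset.filter_filter, ← Finset.filter_filter]
      exact Finset.card_filter_add_card_filter_not _
    rw [e, hcard2]
  have hrkA : (Finset.univ.filter fun i : Fin n =>
      ((i:ℕ)+1 ≤ p) ∧ ((w i:ℕ)+1 ≤ q)).card = rank w p q := by
    unfold rank; congr 1
  have hrkC : (Finset.univ.filter fun i : Fin n =>
      ((w i:ℕ)+1 ≤ q) ∧ ((i:ℕ)+1 ≤ p)).card = rank w p q := by
    unfold rank; congr 1; ext i; simp; tauto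
  obtain ⟨a, haA, b, hbA, hab⟩ := Finset.one_lt_card.mp
    (show 1 < (Finset.univ.filter fun i : Fin n =>
      ((i:ℕ)+1 ≤ p) ∧ ¬((w i:ℕ)+1 ≤ q)).card by omega)
  obtain ⟨c, hcC, d, hdC, hcd⟩ := Finset.one_lt_card.mp
    (show 1 < (Finset.univ.filter fun i : Fin n =>
      ((w i:ℕ)+1 ≤ q) ∧ ¬((i:ℕ)+1 ≤ p)).card by omega)
  simp only [Finset.mem_filter, Finset.mem_univ, true_and] at haA hbA hcC hdC
  clear hr hcon hmin hsplitA hsplitC hrkA hrkC hcard1 hcard1q hcard2 hwp hwp1 hwq hwq1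
  -- refined value facts
  have refineA : ∀ x : Fin n, (x:ℕ)+1 ≤ p → ¬((w x:ℕ)+1 ≤ q) → q+2 ≤ (w x:ℕ)+1 := by
    intro x hx hv
    have := hinj x y (by omega)
    omega
  have refineC : ∀ x : Fin n, (w x:ℕ)+1 ≤ q → ¬((x:ℕ)+1 ≤ p) →
      (w x:ℕ)+2 ≤ q ∧ p+1 ≤ (x:ℕ) := by
    intro x hv hx
    have h1 := hinj x z (by omega)
    have h2 : (w x:ℕ)+2 ≤ q := by omega
    have h3 : (x:ℕ) ≠ p := by
      intro hh
      have := hposinj x P1 (by omega)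
      omega
    exact ⟨h2, by omega⟩
  have hva := refineA a haA.1 haA.2
  have hvb := refineA b hbA.1 hbA.2
  obtain ⟨hvc, hpc⟩ := refineC c hcC.1 hcC.2
  obtain ⟨hvd, hpd⟩ := refineC d hdC.1 hdC.2
  -- the key contradiction, for sorted pairs
  have key : ∀ a1 a2 c1 c2 : Fin n,
      (a1:ℕ) < (a2:ℕ) → (a1:ℕ)+1 ≤ p → (a2:ℕ)+1 ≤ p →
      q+2 ≤ (w a1:ℕ)+1 → q+2 ≤ (w a2:ℕ)+1 →
      (c1:ℕ) < (c2:ℕ) → p+1 ≤ (c1:ℕ) → p+1 ≤ (c2:ℕ) →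
      (w c1:ℕ)+2 ≤ q → (w c2:ℕ)+2 ≤ q → False := by
    intro a1 a2 c1 c2 ha12 ha1p ha2p hva1 hva2 hc12 hc1p hc2p hvc1 hvc2
    have ha2P0 : (a2:ℕ) < p - 1 := by
      have hne : (a2:ℕ) ≠ p - 1 := by
        intro hh
        have := hposinj a2 P0 (by omega)
        omega
      omega
    rcases lt_trichotomy ((w a1:ℕ)) ((w a2:ℕ)) with hA | hA | hA
    · -- A1 < A2 : 3412 at (a1, a2, P0, y)
      exact h1 (pat3412 w a1 a2 P0 y (by omega) (by omega) (by omega)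
        (by omega) (by omega) (by omega))
    · exact hinj a1 a2 (by omega) hA
    · rcases lt_trichotomy ((w c1:ℕ)) ((w c2:ℕ)) with hU | hU | hU
      · -- U < V : 3412 at (z, P1, c1, c2)
        exact h1 (pat3412 w z P1 c1 c2 (by omega) (by omega) (by omega)
          (by omega) (by omega) (by omega))
      · exact hinj c1 c2 (by omega) hU
      · rcases lt_trichotomy ((z:ℕ)) ((a2:ℕ)) with hza | hza | hza
        · -- z < a2
          rcases lt_trichotomy ((w P0:ℕ)) ((w c1:ℕ)) with hSU | hSU | hSU
          · -- S < U : 3412 at (z, a2, P0, c1)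
            exact h1 (pat3412 w z a2 P0 c1 (by omega) (by omega) (by omega)
              (by omega) (by omega) (by omega))
          · exact hinj P0 c1 (by omega) hSU
          · rcases lt_trichotomy ((w P1:ℕ)) ((w a2:ℕ)) with hTA | hTA | hTA
            · -- T < A2 : 653421 at (a1, a2, P0, P1, c1, c2)
              exact h2 (pat653421 w a1 a2 P0 P1 c1 c2 (by omega) (by omega) (by omega)
                (by omega) (by omega) (by omega) (by omega) (by omega) (by omega) (by omega))
            · exact hinj P1 a2 (by omega) hTA
            · rcases lt_trichotomy ((y:ℕ)) ((c1:ℕ)) with hyc | hyc | hyc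
              · -- y < c1 : 653421 at (a1, a2, P0, y, c1, c2)
                exact h2 (pat653421 w a1 a2 P0 y c1 c2 (by omega) (by omega) (by omega)
                  (by omega) (by omega) (by omega) (by omega) (by omega) (by omega) (by omega))
              · exact absurd (hposinj y c1 (by omega)) (by omega)
              · -- c1 < y : 3412 at (a2, P1, c1, y)
                exact h1 (pat3412 w a2 P1 c1 y (by omega) (by omega) (by omega)
                  (by omega) (by omega) (by omega))
        · exact absurd (hposinj z a2 (by omega)) (by omega)
        · -- a2 < z
          rcases lt_trichotomy ((w P1:ℕ)) ((w a2:ℕ)) with hTA | hTA | hTA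
          · -- T < A2 : 653421 at (a1, a2, z, P1, c1, c2)
            exact h2 (pat653421 w a1 a2 z P1 c1 c2 (by omega) (by omega) (by omega)
              (by omega) (by omega) (by omega) (by omega) (by omega) (by omega) (by omega))
          · exact hinj P1 a2 (by omega) hTA
          · rcases lt_trichotomy ((y:ℕ)) ((c1:ℕ)) with hyc | hyc | hyc
            · -- y < c1 : 653421 at (a1, a2, z, y, c1, c2)
              exact h2 (pat653421 w a1 a2 z y c1 c2 (by omega) (by omega) (by omega)
                (by omega) (by omega) (by omega) (by omega) (by omega) (by omega) (by omega))
            · exact absurd (hposinj y c1 (by omega)) (by omega)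
            · -- c1 < y : 3412 at (a2, P1, c1, y)
              exact h1 (pat3412 w a2 P1 c1 y (by omega) (by omega) (by omega)
                (by omega) (by omega) (by omega))
  rcases lt_trichotomy ((a:ℕ)) ((b:ℕ)) with ho | ho | ho
  · rcases lt_trichotomy ((c:ℕ)) ((d:ℕ)) with ho2 | ho2 | ho2
    · exact key a b c d ho haA.1 hbA.1 hva hvb ho2 hpc hpd hvc hvd
    · exact hcd (Fin.val_injective ho2)
    · exact key a b d c ho haA.1 hbA.1 hva hvb ho2 hpd hpc hvd hvc
  · exact hab (Fin.val_injective ho)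
  · rcases lt_trichotomy ((c:ℕ)) ((d:ℕ)) with ho2 | ho2 | ho2
    · exact key b a c d ho hbA.1 haA.1 hvb hva ho2 hpc hpd hvc hvd
    · exact hcd (Fin.val_injective ho2)
    · exact key b a d c ho hbA.1 haA.1 hvb hva ho2 hpd hpc hvd hvc
end

section
/- Let w ∈ S_n avoid the patterns 3412 and 53241. List the elements of Coess(w) as (p_1,q_1),…,(p_k,q_k) in the total order (which exists since w avoids 3412), and set r_j = r_w(p_j,q_j). If (p_i,q_i) is not an inclusion element (r_i < min{p_i,q_i}) and i ≥ 2, then r_{i-1} = r_i − 1. -/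
open Equiv

section Aux

open Finset

variable {n : ℕ}

lemma pval_fin (w : Equiv.Perm (Fin n)) (i : Fin n) :
    pval w ((i : ℕ) + 1) = (w i : ℕ) + 1 := by
  have h : 1 ≤ (i : ℕ) + 1 ∧ (i : ℕ) + 1 ≤ n := ⟨by omega, i.isLt⟩
  unfold pval
  rw [dif_pos h]
  have e : (⟨(i : ℕ) + 1 - 1, by omega⟩ : Fin n) = i := by ext; simp
  rw [e]

lemma pval_inv_fin (w : Equiv.Perm (Fin n)) (i : Fin n) :
    pval w⁻¹ ((w i : ℕ) + 1) = (i : ℕ) + 1 := by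
  have := pval_fin w⁻¹ (w i)
  simpa using this

lemma val_ne_of_ne (w : Equiv.Perm (Fin n)) {x y : Fin n} (h : (x : ℕ) ≠ (y : ℕ)) :
    (w x : ℕ) ≠ (w y : ℕ) := by
  intro he
  exact h (congrArg Fin.val (w.injective (Fin.val_injective he)))

lemma cvRankMono (w : Equiv.Perm (Fin n)) {p1 q1 p2 q2 : ℕ}
    (hp : p1 ≤ p2) (hq : q1 ≤ q2) : rank w p1 q1 ≤ rank w p2 q2 := by
  apply Finset.card_le_card
  intro i hi
  simp only [Finset.mem_filter, Finset.mem_univ, true_and] at hi ⊢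
  omega

lemma cvRankPos (w : Equiv.Perm (Fin n)) {p q : ℕ} (hc : Coess w p q) :
    1 ≤ rank w p q := by
  obtain ⟨hp1, hpn, hq1, hqn, hwp, hwp1, hwiq, hwiq1⟩ := hc
  obtain ⟨x0, hx0⟩ : ∃ x0 : Fin n, (x0 : ℕ) = p - 1 := ⟨⟨p - 1, by omega⟩, rfl⟩
  have hp' : p = (x0 : ℕ) + 1 := by omega
  rw [hp', pval_fin] at hwp
  rw [rank, Nat.one_le_iff_ne_zero, ← Nat.pos_iff_ne_zero, Finset.card_pos]
  exact ⟨x0, by simp only [Finset.mem_filter, Finset.mem_univ, true_and]; omega⟩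

lemma cvRankLt (w : Equiv.Perm (Fin n)) {p q p' q' : ℕ} (hc : Coess w p q)
    (hp : p' ≤ p) (hq : q' ≤ q) (hne : (p', q') ≠ (p, q)) :
    rank w p' q' < rank w p q := by
  obtain ⟨hp1, hpn, hq1, hqn, hwp, hwp1, hwiq, hwiq1⟩ := hc
  apply Finset.card_lt_card
  rw [Finset.ssubset_iff_of_subset]
  · by_cases hqq : q' < q
    · obtain ⟨t0, ht0⟩ : ∃ t0 : Fin n, (w t0 : ℕ) = q - 1 :=
        ⟨w⁻¹ ⟨q - 1, by omega⟩, by simp⟩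
      have hq' : q = (w t0 : ℕ) + 1 := by omega
      rw [hq', pval_inv_fin] at hwiq
      exact ⟨t0, by simp only [Finset.mem_filter, Finset.mem_univ, true_and]; omega,
        by simp only [Finset.mem_filter, Finset.mem_univ, true_and]; omega⟩
    · have hq'' : q' = q := by omega
      have hpp : p' < p := by
        rcases Nat.lt_or_ge p' p with h | h
        · exact h
        · exact absurd (by rw [le_antisymm hp h, hq'']) hne
      obtain ⟨x0, hx0⟩ : ∃ x0 : Fin n, (x0 : ℕ) = p - 1 := ⟨⟨p - 1, by omega⟩, rfl⟩
      have hp' : p = (x0 : ℕ) + 1 := by omega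
      rw [hp', pval_fin] at hwp
      exact ⟨x0, by simp only [Finset.mem_filter, Finset.mem_univ, true_and]; omega,
        by simp only [Finset.mem_filter, Finset.mem_univ, true_and]; omega⟩
  · intro i hi
    simp only [Finset.mem_filter, Finset.mem_univ, true_and] at hi ⊢
    omega

end Aux

section Pat

variable {n : ℕ}

set_option maxRecDepth 10000 in
lemma cvEmb3412 (w : Equiv.Perm (Fin n)) (i j k m : Fin n)
    (o1 : (i : ℕ) < j) (o2 : (j : ℕ) < k) (o3 : (k : ℕ) < m)
    (v1 : (w k : ℕ) < w m) (v2 : (w m : ℕ) < w i) (v3 : (w i : ℕ) < w j) :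
    ContainsPat w [3, 4, 1, 2] := by
  have o1' : i < j := by rw [Fin.lt_def]; exact o1
  have o2' : j < k := by rw [Fin.lt_def]; exact o2
  have o3' : k < m := by rw [Fin.lt_def]; exact o3
  refine ⟨![i, j, k, m], ?_, ?_⟩
  · rw [Fin.strictMono_iff_lt_succ]
    intro a
    fin_cases a <;> simpa
  · have e0 : ![i, j, k, m] ⟨0, by norm_num⟩ = i := rfl
    have e1 : ![i, j, k, m] ⟨1, by norm_num⟩ = j := rfl
    have e2 : ![i, j, k, m] ⟨2, by norm_num⟩ = k := rfl
    have e3 : ![i, j, k, m] ⟨3, by norm_num⟩ = m := rfl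
    intro a b
    fin_cases a <;> fin_cases b <;>
      simp only [e0, e1, e2, e3, List.get_eq_getElem, List.getElem_cons_zero,
        List.getElem_cons_succ, Fin.lt_def] <;>
      omega

set_option maxRecDepth 10000 in
lemma cvEmb53241 (w : Equiv.Perm (Fin n)) (i1 i2 i3 i4 i5 : Fin n)
    (o1 : (i1 : ℕ) < i2) (o2 : (i2 : ℕ) < i3) (o3 : (i3 : ℕ) < i4) (o4 : (i4 : ℕ) < i5)
    (v1 : (w i5 : ℕ) < w i3) (v2 : (w i3 : ℕ) < w i2) (v3 : (w i2 : ℕ) < w i4)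
    (v4 : (w i4 : ℕ) < w i1) :
    ContainsPat w [5, 3, 2, 4, 1] := by
  have o1' : i1 < i2 := by rw [Fin.lt_def]; exact o1
  have o2' : i2 < i3 := by rw [Fin.lt_def]; exact o2
  have o3' : i3 < i4 := by rw [Fin.lt_def]; exact o3
  have o4' : i4 < i5 := by rw [Fin.lt_def]; exact o4
  refine ⟨![i1, i2, i3, i4, i5], ?_, ?_⟩
  · rw [Fin.strictMono_iff_lt_succ]
    intro a
    fin_cases a <;> simpa
  · have e0 : ![i1, i2, i3, i4, i5] ⟨0, by norm_num⟩ = i1 := rfl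
    have e1 : ![i1, i2, i3, i4, i5] ⟨1, by norm_num⟩ = i2 := rfl
    have e2 : ![i1, i2, i3, i4, i5] ⟨2, by norm_num⟩ = i3 := rfl
    have e3 : ![i1, i2, i3, i4, i5] ⟨3, by norm_num⟩ = i4 := rfl
    have e4 : ![i1, i2, i3, i4, i5] ⟨4, by norm_num⟩ = i5 := rfl
    intro a b
    fin_cases a <;> fin_cases b <;>
      simp only [e0, e1, e2, e3, e4, List.get_eq_getElem, List.getElem_cons_zero,
        List.getElem_cons_succ, Fin.lt_def] <;>
      omega

end Pat

section Pred

variable {n : ℕ}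

lemma cvMemRank (w : Equiv.Perm (Fin n)) (p q : ℕ) (i : Fin n) :
    i ∈ (Finset.univ.filter fun i : Fin n => (i : ℕ) + 1 ≤ p ∧ (w i : ℕ) + 1 ≤ q) ↔
      (i : ℕ) + 1 ≤ p ∧ (w i : ℕ) + 1 ≤ q := by
  simp only [Finset.mem_filter, Finset.mem_univ, true_and]

/-- Corner construction: works if `w(p) = q` or `w(p-1) > q`. -/
lemma cvPredCorner (w : Equiv.Perm (Fin n)) {p q : ℕ} (hc : Coess w p q)
    (hr2 : 2 ≤ rank w p q)
    (hH : pval w p = q ∨ q < pval w (p - 1)) :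
    ∃ P Q, Coess w P Q ∧ P ≤ p ∧ Q ≤ q ∧ (P, Q) ≠ (p, q) ∧
      rank w P Q + 1 = rank w p q := by
  obtain ⟨hp1, hpn, hq1, hqn, hwp, hwp1, hwiq, hwiq1⟩ := hc
  classical
  set pts := (Finset.univ.filter fun i : Fin n => (i : ℕ) + 1 ≤ p ∧ (w i : ℕ) + 1 ≤ q)
    with hpts
  have hrpts : pts.card = rank w p q := rfl
  obtain ⟨x0, hx0⟩ : ∃ x0 : Fin n, (x0 : ℕ) = p - 1 := ⟨⟨p - 1, by omega⟩, rfl⟩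
  have hpx0 : p = (x0 : ℕ) + 1 := by omega
  have hwx0 : (w x0 : ℕ) + 1 ≤ q := by rw [hpx0, pval_fin] at hwp; exact hwp
  have hx0pts : x0 ∈ pts := (cvMemRank w p q x0).mpr ⟨by omega, hwx0⟩
  set R := pts.erase x0 with hR
  have hRcard : R.card = rank w p q - 1 := by
    rw [hR, Finset.card_erase_of_mem hx0pts, hrpts]
  have hRne : R.Nonempty := Finset.card_pos.mp (by omega)
  have hRfacts : ∀ i ∈ R, (i : ℕ) + 1 ≤ p ∧ (w i : ℕ) + 1 ≤ q ∧ i ≠ x0 := by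
    intro i hi
    have h1 := Finset.mem_of_mem_erase hi
    have h2 := Finset.ne_of_mem_erase hi
    rw [cvMemRank] at h1
    exact ⟨h1.1, h1.2, h2⟩
  -- positions in R are < p
  have hRpos : ∀ i ∈ R, (i : ℕ) + 1 ≤ p - 1 := by
    intro i hi
    obtain ⟨ha, hb, hcne⟩ := hRfacts i hi
    have : (i : ℕ) ≠ (x0 : ℕ) := fun h => hcne (Fin.val_injective h)
    omega
  -- in the second case of hH, positions in R are < p - 1
  have hRpos2 : q < pval w (p - 1) → ∀ i ∈ R, (i : ℕ) + 1 ≤ p - 2 := by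
    intro hcase i hi
    obtain ⟨ha, hb, hcne⟩ := hRfacts i hi
    have h1 := hRpos i hi
    rcases Nat.lt_or_ge ((i : ℕ) + 1) (p - 1) with h | h
    · omega
    · exfalso
      have he : p - 1 = (i : ℕ) + 1 := by omega
      rw [he, pval_fin] at hcase
      omega
  set imax := R.max' hRne with himaxd
  have himaxR : imax ∈ R := R.max'_mem hRne
  have hle : ∀ i ∈ R, (i : ℕ) ≤ (imax : ℕ) := fun i hi => R.le_max' i hi
  set Pn := (imax : ℕ) + 1 with hPnd
  have hPnp : Pn ≤ p - 1 := hRpos imax himaxR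
  set Qimg := R.image (fun i : Fin n => (w i : ℕ) + 1) with hQimg
  have hQne : Qimg.Nonempty := hRne.image _
  set Q := Qimg.max' hQne with hQd
  have hQle : ∀ i ∈ R, (w i : ℕ) + 1 ≤ Q := by
    intro i hi
    exact Finset.le_max' Qimg _ (Finset.mem_image_of_mem _ hi)
  obtain ⟨im, himR, hQval⟩ : ∃ im ∈ R, (w im : ℕ) + 1 = Q := by
    obtain ⟨im, h1, h2⟩ := Finset.mem_image.mp (Qimg.max'_mem hQne)
    exact ⟨im, h1, h2⟩
  have hQq : Q ≤ q := by rw [← hQval]; exact (hRfacts im himR).2.1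
  have hQ1 : 1 ≤ Q := by omega
  -- in the first case of hH, Q < q
  have hQltq : pval w p = q → Q + 1 ≤ q := by
    intro hcase
    rw [hpx0, pval_fin] at hcase
    have : (w im : ℕ) ≠ (w x0 : ℕ) :=
      val_ne_of_ne w (fun h => (hRfacts im himR).2.2 (Fin.val_injective h))
    omega
  -- rank of the new box
  have hsets : (Finset.univ.filter fun i : Fin n => (i : ℕ) + 1 ≤ Pn ∧ (w i : ℕ) + 1 ≤ Q) = R := by
    ext i
    rw [cvMemRank]
    constructor
    · rintro ⟨ha, hb⟩
      have hipts : i ∈ pts := (cvMemRank w p q i).mpr ⟨by omega, by omega⟩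
      refine Finset.mem_erase.mpr ⟨?_, hipts⟩
      intro he
      rw [he] at ha
      omega
    · intro hi
      exact ⟨by have := hle i hi; omega, hQle i hi⟩
  have hrankPQ : rank w Pn Q = rank w p q - 1 := by
    rw [← hRcard, rank, hsets]
  -- boundary column condition
  have hcol : Q < pval w (Pn + 1) := by
    obtain ⟨j0, hj0⟩ : ∃ j0 : Fin n, (j0 : ℕ) = Pn := ⟨⟨Pn, by omega⟩, rfl⟩
    have hPn1 : Pn + 1 = (j0 : ℕ) + 1 := by omega
    rw [hPn1, pval_fin]
    rcases Nat.lt_or_ge q ((w j0 : ℕ) + 1) with h | h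
    · omega
    · -- j0 ∈ pts, j0 ∉ R, so j0 = x0
      have hj0pts : j0 ∈ pts := (cvMemRank w p q j0).mpr ⟨by omega, h⟩
      have hj0R : j0 ∉ R := by
        intro hmem
        have := hle j0 hmem
        omega
      have hj0x0 : j0 = x0 := by
        by_contra hne
        exact hj0R (Finset.mem_erase.mpr ⟨hne, hj0pts⟩)
      have hj0v : (j0 : ℕ) = p - 1 := by rw [hj0x0, hx0]
      rcases hH with hcase | hcase
      · have h5 := hQltq hcase
        rw [hpx0, pval_fin] at hcase
        have h6 : (w j0 : ℕ) = (w x0 : ℕ) := by rw [hj0x0]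
        omega
      · -- positions in R ≤ p - 2, but Pn = p - 1
        exfalso
        have := hRpos2 hcase imax himaxR
        omega
  -- boundary row condition
  have hrow : Pn < pval w⁻¹ (Q + 1) := by
    rcases Nat.lt_or_ge Q q with hQlt | hQge
    · obtain ⟨x1, hx1⟩ : ∃ x1 : Fin n, (w x1 : ℕ) = Q := ⟨w⁻¹ ⟨Q, by omega⟩, by simp⟩
      have hQ1' : Q + 1 = (w x1 : ℕ) + 1 := by omega
      rw [hQ1', pval_inv_fin]
      rcases Nat.lt_or_ge p ((x1 : ℕ) + 1) with h | h
      · omega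
      · have hx1pts : x1 ∈ pts := (cvMemRank w p q x1).mpr ⟨h, by omega⟩
        have hx1R : x1 ∉ R := by
          intro hmem
          have := hQle x1 hmem
          omega
        have hx1x0 : x1 = x0 := by
          by_contra hne
          exact hx1R (Finset.mem_erase.mpr ⟨hne, hx1pts⟩)
        have : (x1 : ℕ) = p - 1 := by rw [hx1x0, hx0]
        omega
    · have hQeq : Q = q := by omega
      rw [hQeq]
      omega
  -- assemble
  have hwPn : pval w Pn ≤ Q := by
    have : Pn = (imax : ℕ) + 1 := rfl
    rw [this, pval_fin]
    exact hQle imax himaxR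
  have hwiQ : pval w⁻¹ Q ≤ Pn := by
    have hQ1' : Q = (w im : ℕ) + 1 := hQval.symm
    rw [hQ1', pval_inv_fin]
    have := hle im himR
    omega
  refine ⟨Pn, Q, ⟨by omega, by omega, hQ1, by omega, hwPn, hcol, hwiQ, hrow⟩,
    by omega, hQq, ?_, by omega⟩
  intro he
  have : Pn = p := (Prod.mk.injEq _ _ _ _).mp he |>.1
  omega

/-- Row construction: works if `w⁻¹(q-1) > p`. -/
lemma cvPredRow (w : Equiv.Perm (Fin n)) {p q : ℕ} (hc : Coess w p q)
    (hr2 : 2 ≤ rank w p q) (hq2 : 2 ≤ q)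
    (hH : p < pval w⁻¹ (q - 1)) :
    ∃ P Q, Coess w P Q ∧ P ≤ p ∧ Q ≤ q ∧ (P, Q) ≠ (p, q) ∧
      rank w P Q + 1 = rank w p q := by
  obtain ⟨hp1, hpn, hq1, hqn, hwp, hwp1, hwiq, hwiq1⟩ := hc
  classical
  set pts := (Finset.univ.filter fun i : Fin n => (i : ℕ) + 1 ≤ p ∧ (w i : ℕ) + 1 ≤ q)
    with hpts
  have hrpts : pts.card = rank w p q := rfl
  -- x0 : position of value q
  obtain ⟨x0, hx0⟩ : ∃ x0 : Fin n, (w x0 : ℕ) + 1 = q := ⟨w⁻¹ ⟨q - 1, by omega⟩, by simp; omega⟩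
  have hqx0 : q = (w x0 : ℕ) + 1 := hx0.symm
  have hx0p : (x0 : ℕ) + 1 ≤ p := by rw [hqx0, pval_inv_fin] at hwiq; exact hwiq
  have hx0pts : x0 ∈ pts := (cvMemRank w p q x0).mpr ⟨hx0p, by omega⟩
  -- u0 : position of value q - 1 is beyond p
  obtain ⟨u0, hu0⟩ : ∃ u0 : Fin n, (w u0 : ℕ) + 2 = q := ⟨w⁻¹ ⟨q - 2, by omega⟩, by simp; omega⟩
  have hu0p : p < (u0 : ℕ) + 1 := by
    have hq1' : q - 1 = (w u0 : ℕ) + 1 := by omega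
    rw [hq1', pval_inv_fin] at hH
    exact hH
  set R := pts.erase x0 with hR
  have hRcard : R.card = rank w p q - 1 := by
    rw [hR, Finset.card_erase_of_mem hx0pts, hrpts]
  have hRne : R.Nonempty := Finset.card_pos.mp (by omega)
  have hRfacts : ∀ i ∈ R, (i : ℕ) + 1 ≤ p ∧ (w i : ℕ) + 1 ≤ q ∧ i ≠ x0 := by
    intro i hi
    have h1 := Finset.mem_of_mem_erase hi
    have h2 := Finset.ne_of_mem_erase hi
    rw [cvMemRank] at h1
    exact ⟨h1.1, h1.2, h2⟩
  -- values in R are ≤ q - 2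
  have hRval : ∀ i ∈ R, (w i : ℕ) + 3 ≤ q := by
    intro i hi
    obtain ⟨ha, hb, hcne⟩ := hRfacts i hi
    have h1 : (w i : ℕ) ≠ (w x0 : ℕ) :=
      val_ne_of_ne w (fun h => hcne (Fin.val_injective h))
    have h2 : (w i : ℕ) ≠ (w u0 : ℕ) := by
      intro he
      have : i = u0 := w.injective (Fin.val_injective he)
      rw [this] at ha
      omega
    omega
  set imax := R.max' hRne with himaxd
  have himaxR : imax ∈ R := R.max'_mem hRne
  have hle : ∀ i ∈ R, (i : ℕ) ≤ (imax : ℕ) := fun i hi => R.le_max' i hi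
  set Pn := (imax : ℕ) + 1 with hPnd
  have hPnp : Pn ≤ p := (hRfacts imax himaxR).1
  set Qimg := R.image (fun i : Fin n => (w i : ℕ) + 1) with hQimg
  have hQne : Qimg.Nonempty := hRne.image _
  set Q := Qimg.max' hQne with hQd
  have hQle : ∀ i ∈ R, (w i : ℕ) + 1 ≤ Q := by
    intro i hi
    exact Finset.le_max' Qimg _ (Finset.mem_image_of_mem _ hi)
  obtain ⟨im, himR, hQval⟩ : ∃ im ∈ R, (w im : ℕ) + 1 = Q := by
    obtain ⟨im, h1, h2⟩ := Finset.mem_image.mp (Qimg.max'_mem hQne)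
    exact ⟨im, h1, h2⟩
  have hQq : Q + 2 ≤ q := by
    have := hRval im himR
    omega
  have hQ1 : 1 ≤ Q := by omega
  have hsets : (Finset.univ.filter fun i : Fin n => (i : ℕ) + 1 ≤ Pn ∧ (w i : ℕ) + 1 ≤ Q) = R := by
    ext i
    rw [cvMemRank]
    constructor
    · rintro ⟨ha, hb⟩
      have hipts : i ∈ pts := (cvMemRank w p q i).mpr ⟨by omega, by omega⟩
      refine Finset.mem_erase.mpr ⟨?_, hipts⟩
      intro he
      rw [he] at hb
      omega
    · intro hi
      exact ⟨by have := hle i hi; omega, hQle i hi⟩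
  have hrankPQ : rank w Pn Q = rank w p q - 1 := by
    rw [← hRcard, rank, hsets]
  have hcol : Q < pval w (Pn + 1) := by
    obtain ⟨j0, hj0⟩ : ∃ j0 : Fin n, (j0 : ℕ) = Pn := ⟨⟨Pn, by omega⟩, rfl⟩
    have hPn1 : Pn + 1 = (j0 : ℕ) + 1 := by omega
    rw [hPn1, pval_fin]
    rcases Nat.lt_or_ge q ((w j0 : ℕ) + 1) with h | h
    · omega
    · rcases Nat.lt_or_ge p ((j0 : ℕ) + 1) with h2 | h2
      · -- j0 is position p + 1: value > q, contradiction with h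
        exfalso
        have hpj0 : p + 1 = (j0 : ℕ) + 1 := by omega
        rw [hpj0, pval_fin] at hwp1
        omega
      · have hj0pts : j0 ∈ pts := (cvMemRank w p q j0).mpr ⟨h2, h⟩
        have hj0R : j0 ∉ R := by
          intro hmem
          have := hle j0 hmem
          omega
        have hj0x0 : j0 = x0 := by
          by_contra hne
          exact hj0R (Finset.mem_erase.mpr ⟨hne, hj0pts⟩)
        have : (w j0 : ℕ) = (w x0 : ℕ) := by rw [hj0x0]
        omega
  have hrow : Pn < pval w⁻¹ (Q + 1) := by
    obtain ⟨x1, hx1⟩ : ∃ x1 : Fin n, (w x1 : ℕ) = Q := ⟨w⁻¹ ⟨Q, by omega⟩, by simp⟩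
    have hQ1' : Q + 1 = (w x1 : ℕ) + 1 := by omega
    rw [hQ1', pval_inv_fin]
    rcases Nat.lt_or_ge p ((x1 : ℕ) + 1) with h | h
    · omega
    · exfalso
      have hx1pts : x1 ∈ pts := (cvMemRank w p q x1).mpr ⟨h, by omega⟩
      have hx1R : x1 ∉ R := by
        intro hmem
        have := hQle x1 hmem
        omega
      have hx1x0 : x1 = x0 := by
        by_contra hne
        exact hx1R (Finset.mem_erase.mpr ⟨hne, hx1pts⟩)
      have : (w x1 : ℕ) = (w x0 : ℕ) := by rw [hx1x0]
      omega
  have hwPn : pval w Pn ≤ Q := by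
    have : Pn = (imax : ℕ) + 1 := rfl
    rw [this, pval_fin]
    exact hQle imax himaxR
  have hwiQ : pval w⁻¹ Q ≤ Pn := by
    have hQ1' : Q = (w im : ℕ) + 1 := hQval.symm
    rw [hQ1', pval_inv_fin]
    have := hle im himR
    omega
  refine ⟨Pn, Q, ⟨by omega, by omega, hQ1, by omega, hwPn, hcol, hwiQ, hrow⟩,
    hPnp, by omega, ?_, by omega⟩
  intro he
  have : Q = q := (Prod.mk.injEq _ _ _ _).mp he |>.2
  omega

end Pred

section Key

variable {n : ℕ}

/-- Key lemma: for a non-inclusion coessential box, if `w` avoids 3412 and 53241,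
we cannot have `w(p-1) ≤ q`, `w⁻¹(q-1) ≤ p` and `w(p) < q` simultaneously. -/
lemma cvKey (w : Equiv.Perm (Fin n))
    (h1 : ¬ ContainsPat w [3, 4, 1, 2]) (h2 : ¬ ContainsPat w [5, 3, 2, 4, 1])
    {p q : ℕ} (hc : Coess w p q) (hrp : rank w p q < p) (hrq : rank w p q < q)
    (hq2 : 2 ≤ q)
    (hA : pval w (p - 1) ≤ q) (hB : pval w⁻¹ (q - 1) ≤ p) (hC : pval w p < q) :
    False := by
  obtain ⟨hp1, hpn, hq1, hqn, hwp, hwp1, hwiq, hwiq1⟩ := hc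
  classical
  have hne_vals : ∀ x y : Fin n, (x : ℕ) ≠ (y : ℕ) → (w x : ℕ) ≠ (w y : ℕ) :=
    fun x y h => val_ne_of_ne w h
  have hne_pos : ∀ x y : Fin n, (w x : ℕ) ≠ (w y : ℕ) → (x : ℕ) ≠ (y : ℕ) := by
    intro x y h hxy
    exact h (congrArg (fun z : Fin n => (w z : ℕ)) (Fin.val_injective hxy))
  -- position p (0-indexed pp0)
  obtain ⟨pp0, hpp0⟩ : ∃ x : Fin n, (x : ℕ) = p - 1 := ⟨⟨p - 1, by omega⟩, rfl⟩
  have hppv : (w pp0 : ℕ) + 2 ≤ q := by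
    have he : p = (pp0 : ℕ) + 1 := by omega
    rw [he, pval_fin] at hC
    omega
  -- position p + 1 (0-indexed pl0)
  obtain ⟨pl0, hpl0⟩ : ∃ x : Fin n, (x : ℕ) = p := ⟨⟨p, by omega⟩, rfl⟩
  have hplv : q ≤ (w pl0 : ℕ) := by
    have he : p + 1 = (pl0 : ℕ) + 1 := by omega
    rw [he, pval_fin] at hwp1
    omega
  -- position of value q
  obtain ⟨t0, ht0v⟩ : ∃ x : Fin n, (w x : ℕ) + 1 = q :=
    ⟨w⁻¹ ⟨q - 1, by omega⟩, by simp; omega⟩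
  have ht0p : (t0 : ℕ) + 1 ≤ p := by
    have he : q = (w t0 : ℕ) + 1 := by omega
    rw [he, pval_inv_fin] at hwiq
    exact hwiq
  -- position of value q - 1
  obtain ⟨u0, hu0v⟩ : ∃ x : Fin n, (w x : ℕ) + 2 = q :=
    ⟨w⁻¹ ⟨q - 2, by omega⟩, by simp; omega⟩
  have hu0p : (u0 : ℕ) + 1 ≤ p := by
    have he : q - 1 = (w u0 : ℕ) + 1 := by omega
    rw [he, pval_inv_fin] at hB
    exact hB
  -- position of value q + 1
  obtain ⟨c0, hc0v⟩ : ∃ x : Fin n, (w x : ℕ) = q := ⟨w⁻¹ ⟨q, by omega⟩, by simp⟩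
  have hc0p : p ≤ (c0 : ℕ) := by
    have he : q + 1 = (w c0 : ℕ) + 1 := by omega
    rw [he, pval_inv_fin] at hwiq1
    omega
  -- a0 : a position ≤ p with value > q
  obtain ⟨a0, ha0p, ha0v⟩ : ∃ x : Fin n, (x : ℕ) + 1 ≤ p ∧ q < (w x : ℕ) + 1 := by
    by_contra hno
    push_neg at hno
    have hmaps : ∀ a ∈ (Finset.univ : Finset (Fin p)), (⟨(a : ℕ), by omega⟩ : Fin n) ∈
        (Finset.univ.filter fun i : Fin n => (i : ℕ) + 1 ≤ p ∧ (w i : ℕ) + 1 ≤ q) := by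
      intro a _
      rw [cvMemRank]
      have := a.isLt
      have hgoal : ((⟨(a : ℕ), by omega⟩ : Fin n) : ℕ) + 1 ≤ p := by
        show (a : ℕ) + 1 ≤ p
        omega
      exact ⟨hgoal, hno _ hgoal⟩
    have hcard := Finset.card_le_card_of_injOn _ hmaps (by
      intro a _ b _ hab
      have : (a : ℕ) = (b : ℕ) := by simpa using congrArg Fin.val hab
      exact Fin.val_injective this)
    simp only [Finset.card_univ, Fintype.card_fin] at hcard
    rw [rank] at hrp
    omega
  -- b0 : a position > p with value ≤ q
  obtain ⟨b0, hb0p, hb0v⟩ : ∃ x : Fin n, p < (x : ℕ) + 1 ∧ (w x : ℕ) + 1 ≤ q := by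
    by_contra hno
    push_neg at hno
    have hmaps : ∀ a ∈ (Finset.univ : Finset (Fin q)), (w⁻¹ ⟨(a : ℕ), by omega⟩ : Fin n) ∈
        (Finset.univ.filter fun i : Fin n => (i : ℕ) + 1 ≤ p ∧ (w i : ℕ) + 1 ≤ q) := by
      intro a _
      rw [cvMemRank]
      have hval : (w (w⁻¹ ⟨(a : ℕ), by omega⟩) : ℕ) = (a : ℕ) := by simp
      have hlt := a.isLt
      constructor
      · by_contra hgt
        push_neg at hgt
        have := hno (w⁻¹ ⟨(a : ℕ), by omega⟩) (by omega)
        omega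
      · omega
    have hcard := Finset.card_le_card_of_injOn _ hmaps (by
      intro a _ b _ hab
      have h3 : (⟨(a : ℕ), by omega⟩ : Fin n) = ⟨(b : ℕ), by omega⟩ := w⁻¹.injective hab
      have : (a : ℕ) = (b : ℕ) := by simpa using congrArg Fin.val h3
      exact Fin.val_injective this)
    simp only [Finset.card_univ, Fintype.card_fin] at hcard
    rw [rank] at hrq
    omega
  -- w a0 ≥ q + 1
  have ha0v' : q + 1 ≤ (w a0 : ℕ) := by
    have := hne_vals a0 c0 (by omega)
    omega
  -- p ≥ 2 and a0 ≤ p - 2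
  have hap : (a0 : ℕ) ≠ (pp0 : ℕ) := hne_pos _ _ (by omega)
  have hp2 : 2 ≤ p := by omega
  -- position p - 1 (0-indexed pm0)
  obtain ⟨pm0, hpm0⟩ : ∃ x : Fin n, (x : ℕ) = p - 2 := ⟨⟨p - 2, by omega⟩, rfl⟩
  have hpmv : (w pm0 : ℕ) + 1 ≤ q := by
    have he : p - 1 = (pm0 : ℕ) + 1 := by omega
    rw [he, pval_fin] at hA
    exact hA
  have hapm : (a0 : ℕ) ≠ (pm0 : ℕ) := hne_pos _ _ (by omega)
  have ha0p3 : (a0 : ℕ) + 3 ≤ p := by omega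
  -- b0 value ≤ q - 3, b0 position ≥ p + 1
  have hbt : (w b0 : ℕ) ≠ (w t0 : ℕ) := hne_vals _ _ (by omega)
  have hbu : (w b0 : ℕ) ≠ (w u0 : ℕ) := hne_vals _ _ (by omega)
  have hb0v3 : (w b0 : ℕ) + 3 ≤ q := by omega
  have hb0p1 : p + 1 ≤ (b0 : ℕ) := by
    have := hne_pos b0 pl0 (by omega)
    omega
  have htpp : (t0 : ℕ) ≠ (pp0 : ℕ) := hne_pos _ _ (by omega)
  have hta : (t0 : ℕ) ≠ (a0 : ℕ) := hne_pos _ _ (by omega)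
  have htu : (t0 : ℕ) ≠ (u0 : ℕ) := hne_pos _ _ (by omega)
  -- Step 1: the middle decreasing pair
  have hmidpair : ∃ x y : Fin n, (a0 : ℕ) < (x : ℕ) ∧ (x : ℕ) < (y : ℕ) ∧
      (y : ℕ) + 1 ≤ p ∧ (w y : ℕ) < (w x : ℕ) ∧ (w x : ℕ) + 1 ≤ q ∧
      (w b0 : ℕ) < (w y : ℕ) := by
    by_cases hmid : (a0 : ℕ) < (t0 : ℕ) ∧ (t0 : ℕ) < (u0 : ℕ)
    · exact ⟨t0, u0, hmid.1, hmid.2, hu0p, by omega, by omega, by omega⟩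
    · have hor : (t0 : ℕ) < (a0 : ℕ) ∨ (u0 : ℕ) < (t0 : ℕ) := by
        rcases not_and_or.mp hmid with h | h <;> push_neg at h <;> omega
      have hc3 : (w b0 : ℕ) < (w pp0 : ℕ) := by
        by_contra hle
        push_neg at hle
        have hlt : (w pp0 : ℕ) < (w b0 : ℕ) := by
          have := hne_vals pp0 b0 (by omega)
          omega
        rcases hor with h | h
        · exact h1 (cvEmb3412 w t0 a0 pp0 b0 h (by omega) (by omega)
            hlt (by omega) (by omega))
        · exact h1 (cvEmb3412 w u0 t0 pp0 b0 h (by omega) (by omega)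
            hlt (by omega) (by omega))
      have hc2 : (w pp0 : ℕ) < (w pm0 : ℕ) := by
        by_contra hle
        push_neg at hle
        have hlt : (w pm0 : ℕ) < (w pp0 : ℕ) := by
          have := hne_vals pm0 pp0 (by omega)
          omega
        rcases hor with h | h
        · exact h1 (cvEmb3412 w t0 a0 pm0 pp0 h (by omega) (by omega)
            hlt (by omega) (by omega))
        · have htpm : (t0 : ℕ) ≠ (pm0 : ℕ) := by
            intro he
            have : (w t0 : ℕ) = (w pm0 : ℕ) :=
              congrArg (fun z : Fin n => (w z : ℕ)) (Fin.val_injective he)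
            omega
          have h7 : (w u0 : ℕ) ≠ (w pp0 : ℕ) := hne_vals _ _ (by omega)
          exact h1 (cvEmb3412 w u0 t0 pm0 pp0 h (by omega) (by omega)
            hlt (by omega) (by omega))
      exact ⟨pm0, pp0, by omega, by omega, by omega, hc2, hpmv, hc3⟩
  obtain ⟨x, y, hax, hxy, hyp', hyx, hxq, hby⟩ := hmidpair
  -- Step 2: complete to a forbidden pattern
  rcases Nat.lt_or_ge (w pl0 : ℕ) (w a0 : ℕ) with hapl | hapl
  · exact h2 (cvEmb53241 w a0 x y pl0 b0 hax hxy (by omega) (by omega)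
      hby hyx (by omega) hapl)
  · have hapl' : (w a0 : ℕ) < (w pl0 : ℕ) := by
      have := hne_vals a0 pl0 (by omega)
      omega
    rcases Nat.lt_or_ge (c0 : ℕ) (b0 : ℕ) with hcb | hcb
    · exact h2 (cvEmb53241 w a0 x y c0 b0 hax hxy (by omega) hcb
        hby hyx (by omega) (by omega))
    · have hbc : (b0 : ℕ) < (c0 : ℕ) := by
        have := hne_pos b0 c0 (by omega)
        omega
      exact h1 (cvEmb3412 w a0 pl0 b0 c0 (by omega) (by omega) hbc
        (by omega) (by omega) hapl')

end Key

/-- If w avoids 3412 and 53241, and (p',q') is the immediate predecessor in Coess(w)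
of a non-inclusion element (p,q), then r_{i-1} = r_i − 1. -/
theorem stmt5 {n : ℕ} (w : Equiv.Perm (Fin n))
    (h1 : ¬ ContainsPat w [3, 4, 1, 2]) (h2 : ¬ ContainsPat w [5, 3, 2, 4, 1])
    (p q p' q' : ℕ) (hc : Coess w p q) (hc' : Coess w p' q')
    (hlt : p' ≤ p ∧ q' ≤ q ∧ (p', q') ≠ (p, q))
    (hconsec : ∀ p'' q'', Coess w p'' q'' → p'' ≤ p → q'' ≤ q → (p'', q'') ≠ (p, q) →
      p'' ≤ p' ∧ q'' ≤ q')
    (hni : rank w p q < min p q) :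
    rank w p' q' + 1 = rank w p q := by
  obtain ⟨hp'le, hq'le, hne'⟩ := hlt
  have hr' := cvRankLt w hc hp'le hq'le hne'
  have h1r := cvRankPos w hc'
  have hr2 : 2 ≤ rank w p q := by omega
  have hmin := hni
  rw [lt_min_iff] at hmin
  obtain ⟨hrp, hrq⟩ := hmin
  have hq2 : 2 ≤ q := by omega
  obtain ⟨P, Q, hco, hPp, hQq, hnePQ, hrank⟩ :
      ∃ P Q, Coess w P Q ∧ P ≤ p ∧ Q ≤ q ∧ (P, Q) ≠ (p, q) ∧
        rank w P Q + 1 = rank w p q := by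
    by_cases h3 : pval w p = q
    · exact cvPredCorner w hc hr2 (Or.inl h3)
    by_cases hA : q < pval w (p - 1)
    · exact cvPredCorner w hc hr2 (Or.inr hA)
    by_cases hB : p < pval w⁻¹ (q - 1)
    · exact cvPredRow w hc hr2 hq2 hB
    push_neg at hA hB
    have hC : pval w p < q := lt_of_le_of_ne hc.2.2.2.2.1 h3
    exact (cvKey w h1 h2 hc hrp hrq hq2 hA hB hC).elim
  obtain ⟨hPp', hQq'⟩ := hconsec P Q hco hPp hQq hnePQ
  have hmono := cvRankMono w hPp' hQq'
  omega
end

section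
/- Let w ∈ S_n avoid 3412, and suppose the coessential set of w contains exactly one element (p,q) that is not an inclusion element. If w contains both the pattern 53241 and the pattern 52431, then w contains the pattern 632541. -/
open Equiv

/-! ### Auxiliary lemmas for `stmt6` -/

lemma pval_coe' {n : ℕ} (w : Equiv.Perm (Fin n)) (x : Fin n) :
    pval w ((x : ℕ) + 1) = (w x : ℕ) + 1 := by
  have hx := x.isLt
  rw [pval, dif_pos ⟨by omega, by omega⟩]
  have : (⟨(x : ℕ) + 1 - 1, by omega⟩ : Fin n) = x := Fin.ext (by simp)
  rw [this]

lemma pval_inv' {n : ℕ} (w : Equiv.Perm (Fin n)) (x : Fin n) :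
    pval w⁻¹ ((w x : ℕ) + 1) = (x : ℕ) + 1 := by
  have hx := (w x).isLt
  rw [pval, dif_pos ⟨by omega, by omega⟩]
  have : (⟨(w x : ℕ) + 1 - 1, by omega⟩ : Fin n) = w x := Fin.ext (by simp)
  rw [this]
  simp

lemma slide' {n : ℕ} (w : Equiv.Perm (Fin n)) (pb vb : ℕ) (hpbn : pb ≤ n) (hvbn : vb ≤ n)
    (hbv : vb ≤ pval w pb) (hbp : pb ≤ pval w⁻¹ vb) :
    ∀ k p0 q0, pb + vb ≤ p0 + q0 + k → 1 ≤ p0 → p0 < pb → 1 ≤ q0 → q0 < vb →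
      pval w p0 ≤ q0 → pval w⁻¹ q0 ≤ p0 →
      ∃ p q, p0 ≤ p ∧ p < pb ∧ q0 ≤ q ∧ q < vb ∧ Coess w p q := by
  intro k
  induction k with
  | zero => intro p0 q0 hm h1 h2 h3 h4 _ _; omega
  | succ k ih =>
    intro p0 q0 hm h1 h2 h3 h4 hw hwi
    by_cases hp : pval w (p0 + 1) ≤ q0
    · have hne : p0 + 1 ≠ pb := by
        intro h; rw [h] at hp; omega
      obtain ⟨p, q, hh⟩ := ih (p0+1) q0 (by omega) (by omega) (by omega) h3 h4 hp
        (le_trans hwi (by omega))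
      exact ⟨p, q, by omega, hh.2.1, hh.2.2.1, hh.2.2.2⟩
    · by_cases hq : pval w⁻¹ (q0 + 1) ≤ p0
      · have hne : q0 + 1 ≠ vb := by
          intro h; rw [h] at hq; omega
        obtain ⟨p, q, hh⟩ := ih p0 (q0+1) (by omega) h1 h2 (by omega) (by omega)
          (le_trans hw (by omega)) hq
        exact ⟨p, q, hh.1, hh.2.1, by omega, hh.2.2.2⟩
      · exact ⟨p0, q0, le_refl _, h2, le_refl _, h4,
          h1, by omega, h3, by omega, hw, by omega, hwi, by omega⟩

lemma rank_lt' {n : ℕ} (w : Equiv.Perm (Fin n)) (p q : ℕ) (i j : Fin n)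
    (hi : (i : ℕ) + 1 ≤ p) (hiq : q < (w i : ℕ) + 1)
    (hj : p < (j : ℕ) + 1) (hjq : (w j : ℕ) + 1 ≤ q) :
    rank w p q < min p q := by
  have h1 : rank w p q < p := by
    have hsub : ∀ x : Fin n, x ∈ (Finset.univ.filter fun x : Fin n =>
        (x : ℕ) + 1 ≤ p ∧ (w x : ℕ) + 1 ≤ q) → (x : ℕ) ∈ Finset.range p \ {(i : ℕ)} := by
      intro x hx
      simp only [Finset.mem_filter] at hx
      simp only [Finset.mem_sdiff, Finset.mem_range, Finset.mem_singleton]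
      refine ⟨by omega, fun h => ?_⟩
      have : x = i := Fin.ext h
      subst this; omega
    have hcard := Finset.card_le_card_of_injOn (fun x : Fin n => (x : ℕ)) hsub
      (fun x _ y _ h => Fin.ext h)
    have : (Finset.range p \ {(i : ℕ)}).card = p - 1 := by
      rw [Finset.card_sdiff_of_subset (by simp [Finset.singleton_subset_iff]; omega)]
      simp
    rw [rank]; omega
  have h2 : rank w p q < q := by
    have hsub : ∀ x : Fin n, x ∈ (Finset.univ.filter fun x : Fin n =>
        (x : ℕ) + 1 ≤ p ∧ (w x : ℕ) + 1 ≤ q) → (w x : ℕ) ∈ Finset.range q \ {(w j : ℕ)} := by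
      intro x hx
      simp only [Finset.mem_filter] at hx
      simp only [Finset.mem_sdiff, Finset.mem_range, Finset.mem_singleton]
      refine ⟨by omega, fun h => ?_⟩
      have : x = j := w.injective (Fin.ext h)
      subst this; omega
    have hcard := Finset.card_le_card_of_injOn (fun x : Fin n => (w x : ℕ)) hsub
      (fun x _ y _ h => w.injective (Fin.ext h))
    have : (Finset.range q \ {(w j : ℕ)}).card = q - 1 := by
      rw [Finset.card_sdiff_of_subset (by simp [Finset.singleton_subset_iff]; omega)]
      simp
    rw [rank]; omega
  omega

lemma mergeLemma' {n : ℕ} (w : Equiv.Perm (Fin n))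
    (hav : ∀ i j k m : Fin n, ((i:ℕ) < (j:ℕ) ∧ (j:ℕ) < (k:ℕ) ∧ (k:ℕ) < (m:ℕ) ∧
      (w k:ℕ) < (w m:ℕ) ∧ (w m:ℕ) < (w i:ℕ) ∧ (w i:ℕ) < (w j:ℕ)) → False)
    (a b c d e a2 b2 c2 d2 e2 : Fin n)
    (hp1 : (a:ℕ) < b) (hp2 : (b:ℕ) < c) (hp3 : (c:ℕ) < d) (hp4 : (d:ℕ) < e)
    (hv1 : (w e:ℕ) < w c) (hv2 : (w c:ℕ) < w b) (hv3 : (w b:ℕ) < w d) (hv4 : (w d:ℕ) < w a)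
    (hq1 : (a2:ℕ) < b2) (hq2 : (b2:ℕ) < c2) (hq3 : (c2:ℕ) < d2) (hq4 : (d2:ℕ) < e2)
    (hu1 : (w e2:ℕ) < w b2) (hu2 : (w b2:ℕ) < w d2) (hu3 : (w d2:ℕ) < w c2)
    (hu4 : (w c2:ℕ) < w a2)
    (hx1 : (c:ℕ) < c2) (hx2 : (b2:ℕ) < d) (hx3 : (w b:ℕ) < w d2) (hx4 : (w b2:ℕ) < w d) :
    ∃ x1 x2 x3 x4 x5 x6 : Fin n, (x1:ℕ) < x2 ∧ (x2:ℕ) < x3 ∧ (x3:ℕ) < x4 ∧ (x4:ℕ) < x5 ∧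
      (x5:ℕ) < x6 ∧ (w x6:ℕ) < w x3 ∧ (w x3:ℕ) < w x2 ∧ (w x2:ℕ) < w x5 ∧
      (w x5:ℕ) < w x4 ∧ (w x4:ℕ) < w x1 := by
  rcases Nat.lt_trichotomy (a:ℕ) (a2:ℕ) with hb1 | hb1 | hb1
  · -- pos a < a2
    rcases Nat.lt_trichotomy (w a:ℕ) (w a2:ℕ) with hb2 | hb2 | hb2
    · -- val a < a2
      exact (hav a a2 b2 d (by omega)).elim
    · have hb2p : (a : ℕ) = (a2 : ℕ) := by rw [w.injective (Fin.val_injective hb2)]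
      exact ((by omega : False)).elim
    · -- val a2 < a
      rcases Nat.lt_trichotomy (d2:ℕ) (e:ℕ) with hb3 | hb3 | hb3
      · -- pos d2 < e
        exact ⟨a, b, c, c2, d2, e, by omega⟩
      · have hb3v : (w d2 : ℕ) = (w e : ℕ) := by rw [Fin.val_injective hb3]
        exact ((by omega : False)).elim
      · -- pos e < d2
        rcases Nat.lt_trichotomy (w a2:ℕ) (w d:ℕ) with hb4 | hb4 | hb4
        · -- val a2 < d
          exact (hav a2 d e d2 (by omega)).elim
        · have hb4p : (a2 : ℕ) = (d : ℕ) := by rw [w.injective (Fin.val_injective hb4)]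
          exact ((by omega : False)).elim
        · -- val d < a2
          rcases Nat.lt_trichotomy (w e:ℕ) (w e2:ℕ) with hb5 | hb5 | hb5
          · -- val e < e2
            exact (hav b2 d e e2 (by omega)).elim
          · have hb5p : (e : ℕ) = (e2 : ℕ) := by rw [w.injective (Fin.val_injective hb5)]
            exact ((by omega : False)).elim
          · -- val e2 < e
            exact ⟨a, b, c, c2, d2, e2, by omega⟩
  · have hb1v : (w a : ℕ) = (w a2 : ℕ) := by rw [Fin.val_injective hb1]
    rcases Nat.lt_trichotomy (d2:ℕ) (e:ℕ) with hb2 | hb2 | hb2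
    · -- pos d2 < e
      exact ⟨a, b, c, c2, d2, e, by omega⟩
    · have hb2v : (w d2 : ℕ) = (w e : ℕ) := by rw [Fin.val_injective hb2]
      exact ((by omega : False)).elim
    · -- pos e < d2
      rcases Nat.lt_trichotomy (w e:ℕ) (w e2:ℕ) with hb3 | hb3 | hb3
      · -- val e < e2
        exact (hav b2 d e e2 (by omega)).elim
      · have hb3p : (e : ℕ) = (e2 : ℕ) := by rw [w.injective (Fin.val_injective hb3)]
        exact ((by omega : False)).elim
      · -- val e2 < e
        exact ⟨a, b, c, c2, d2, e2, by omega⟩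
  · -- pos a2 < a
    rcases Nat.lt_trichotomy (w a2:ℕ) (w a:ℕ) with hb2 | hb2 | hb2
    · -- val a2 < a
      exact (hav a2 a b c2 (by omega)).elim
    · have hb2p : (a2 : ℕ) = (a : ℕ) := by rw [w.injective (Fin.val_injective hb2)]
      exact ((by omega : False)).elim
    · -- val a < a2
      rcases Nat.lt_trichotomy (d2:ℕ) (e:ℕ) with hb3 | hb3 | hb3
      · -- pos d2 < e
        exact ⟨a2, b, c, c2, d2, e, by omega⟩
      · have hb3v : (w d2 : ℕ) = (w e : ℕ) := by rw [Fin.val_injective hb3]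
        exact ((by omega : False)).elim
      · -- pos e < d2
        rcases Nat.lt_trichotomy (w e:ℕ) (w e2:ℕ) with hb4 | hb4 | hb4
        · -- val e < e2
          exact (hav b2 d e e2 (by omega)).elim
        · have hb4p : (e : ℕ) = (e2 : ℕ) := by rw [w.injective (Fin.val_injective hb4)]
          exact ((by omega : False)).elim
        · -- val e2 < e
          exact ⟨a2, b, c, c2, d2, e2, by omega⟩

lemma extract53241 {n : ℕ} (w : Equiv.Perm (Fin n)) (h : ContainsPat w [5, 3, 2, 4, 1]) :
    ∃ a b c d e : Fin n, (a:ℕ) < b ∧ (b:ℕ) < c ∧ (c:ℕ) < d ∧ (d:ℕ) < e ∧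
      (w e:ℕ) < w c ∧ (w c:ℕ) < w b ∧ (w b:ℕ) < w d ∧ (w d:ℕ) < w a := by
  obtain ⟨f, hm, hiff⟩ := h
  refine ⟨f ⟨0, by decide⟩, f ⟨1, by decide⟩, f ⟨2, by decide⟩, f ⟨3, by decide⟩,
    f ⟨4, by decide⟩, Fin.lt_def.mp (hm (by decide)), Fin.lt_def.mp (hm (by decide)),
    Fin.lt_def.mp (hm (by decide)), Fin.lt_def.mp (hm (by decide)),
    Fin.lt_def.mp ((hiff ⟨4, by decide⟩ ⟨2, by decide⟩).mp (by decide)),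
    Fin.lt_def.mp ((hiff ⟨2, by decide⟩ ⟨1, by decide⟩).mp (by decide)),
    Fin.lt_def.mp ((hiff ⟨1, by decide⟩ ⟨3, by decide⟩).mp (by decide)),
    Fin.lt_def.mp ((hiff ⟨3, by decide⟩ ⟨0, by decide⟩).mp (by decide))⟩

lemma extract52431 {n : ℕ} (w : Equiv.Perm (Fin n)) (h : ContainsPat w [5, 2, 4, 3, 1]) :
    ∃ a b c d e : Fin n, (a:ℕ) < b ∧ (b:ℕ) < c ∧ (c:ℕ) < d ∧ (d:ℕ) < e ∧
      (w e:ℕ) < w b ∧ (w b:ℕ) < w d ∧ (w d:ℕ) < w c ∧ (w c:ℕ) < w a := by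
  obtain ⟨f, hm, hiff⟩ := h
  refine ⟨f ⟨0, by decide⟩, f ⟨1, by decide⟩, f ⟨2, by decide⟩, f ⟨3, by decide⟩,
    f ⟨4, by decide⟩, Fin.lt_def.mp (hm (by decide)), Fin.lt_def.mp (hm (by decide)),
    Fin.lt_def.mp (hm (by decide)), Fin.lt_def.mp (hm (by decide)),
    Fin.lt_def.mp ((hiff ⟨4, by decide⟩ ⟨1, by decide⟩).mp (by decide)),
    Fin.lt_def.mp ((hiff ⟨1, by decide⟩ ⟨3, by decide⟩).mp (by decide)),
    Fin.lt_def.mp ((hiff ⟨3, by decide⟩ ⟨2, by decide⟩).mp (by decide)),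
    Fin.lt_def.mp ((hiff ⟨2, by decide⟩ ⟨0, by decide⟩).mp (by decide))⟩

lemma build3412 {n : ℕ} (w : Equiv.Perm (Fin n)) (i j k m : Fin n)
    (hp0 : (i:ℕ) < j) (hp1 : (j:ℕ) < k) (hp2 : (k:ℕ) < m) (hv0 : (w k:ℕ) < w m) (hv1 : (w m:ℕ) < w i) (hv2 : (w i:ℕ) < w j) :
    ContainsPat w [3, 4, 1, 2] := by
  refine ⟨fun s => if (s:ℕ) = 0 then i else if (s:ℕ) = 1 then j else if (s:ℕ) = 2 then k else m, ?_, ?_⟩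
  · intro s t hst
    obtain ⟨sv, hs⟩ := s; obtain ⟨tv, ht⟩ := t
    have hs' : sv < 4 := hs
    have ht' : tv < 4 := ht
    interval_cases sv <;> interval_cases tv
    · exact absurd hst (by exact of_decide_eq_false rfl)
    · show (i : Fin n) < j
      exact Fin.lt_def.mpr (by omega)
    · show (i : Fin n) < k
      exact Fin.lt_def.mpr (by omega)
    · show (i : Fin n) < m
      exact Fin.lt_def.mpr (by omega)
    · exact absurd hst (by exact of_decide_eq_false rfl)
    · exact absurd hst (by exact of_decide_eq_false rfl)
    · show (j : Fin n) < k
      exact Fin.lt_def.mpr (by omega)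
    · show (j : Fin n) < m
      exact Fin.lt_def.mpr (by omega)
    · exact absurd hst (by exact of_decide_eq_false rfl)
    · exact absurd hst (by exact of_decide_eq_false rfl)
    · exact absurd hst (by exact of_decide_eq_false rfl)
    · show (k : Fin n) < m
      exact Fin.lt_def.mpr (by omega)
    · exact absurd hst (by exact of_decide_eq_false rfl)
    · exact absurd hst (by exact of_decide_eq_false rfl)
    · exact absurd hst (by exact of_decide_eq_false rfl)
    · exact absurd hst (by exact of_decide_eq_false rfl)
  · intro s t
    obtain ⟨sv, hs⟩ := s; obtain ⟨tv, ht⟩ := t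
    have hs' : sv < 4 := hs
    have ht' : tv < 4 := ht
    interval_cases sv <;> interval_cases tv
    · show (3:ℕ) < 3 ↔ w i < w i
      exact iff_of_false (by omega) (fun h => by have := Fin.lt_def.mp h; omega)
    · show (3:ℕ) < 4 ↔ w i < w j
      exact iff_of_true (by omega) (Fin.lt_def.mpr (by omega))
    · show (3:ℕ) < 1 ↔ w i < w k
      exact iff_of_false (by omega) (fun h => by have := Fin.lt_def.mp h; omega)
    · show (3:ℕ) < 2 ↔ w i < w m
      exact iff_of_false (by omega) (fun h => by have := Fin.lt_def.mp h; omega)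
    · show (4:ℕ) < 3 ↔ w j < w i
      exact iff_of_false (by omega) (fun h => by have := Fin.lt_def.mp h; omega)
    · show (4:ℕ) < 4 ↔ w j < w j
      exact iff_of_false (by omega) (fun h => by have := Fin.lt_def.mp h; omega)
    · show (4:ℕ) < 1 ↔ w j < w k
      exact iff_of_false (by omega) (fun h => by have := Fin.lt_def.mp h; omega)
    · show (4:ℕ) < 2 ↔ w j < w m
      exact iff_of_false (by omega) (fun h => by have := Fin.lt_def.mp h; omega)
    · show (1:ℕ) < 3 ↔ w k < w i
      exact iff_of_true (by omega) (Fin.lt_def.mpr (by omega))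
    · show (1:ℕ) < 4 ↔ w k < w j
      exact iff_of_true (by omega) (Fin.lt_def.mpr (by omega))
    · show (1:ℕ) < 1 ↔ w k < w k
      exact iff_of_false (by omega) (fun h => by have := Fin.lt_def.mp h; omega)
    · show (1:ℕ) < 2 ↔ w k < w m
      exact iff_of_true (by omega) (Fin.lt_def.mpr (by omega))
    · show (2:ℕ) < 3 ↔ w m < w i
      exact iff_of_true (by omega) (Fin.lt_def.mpr (by omega))
    · show (2:ℕ) < 4 ↔ w m < w j
      exact iff_of_true (by omega) (Fin.lt_def.mpr (by omega))
    · show (2:ℕ) < 1 ↔ w m < w k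
      exact iff_of_false (by omega) (fun h => by have := Fin.lt_def.mp h; omega)
    · show (2:ℕ) < 2 ↔ w m < w m
      exact iff_of_false (by omega) (fun h => by have := Fin.lt_def.mp h; omega)

lemma build632541 {n : ℕ} (w : Equiv.Perm (Fin n)) (x1 x2 x3 x4 x5 x6 : Fin n)
    (hp0 : (x1:ℕ) < x2) (hp1 : (x2:ℕ) < x3) (hp2 : (x3:ℕ) < x4) (hp3 : (x4:ℕ) < x5) (hp4 : (x5:ℕ) < x6) (hv0 : (w x6:ℕ) < w x3) (hv1 : (w x3:ℕ) < w x2) (hv2 : (w x2:ℕ) < w x5) (hv3 : (w x5:ℕ) < w x4) (hv4 : (w x4:ℕ) < w x1) :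
    ContainsPat w [6, 3, 2, 5, 4, 1] := by
  refine ⟨fun s => if (s:ℕ) = 0 then x1 else if (s:ℕ) = 1 then x2 else if (s:ℕ) = 2 then x3 else if (s:ℕ) = 3 then x4 else if (s:ℕ) = 4 then x5 else x6, ?_, ?_⟩
  · intro s t hst
    obtain ⟨sv, hs⟩ := s; obtain ⟨tv, ht⟩ := t
    have hs' : sv < 6 := hs
    have ht' : tv < 6 := ht
    interval_cases sv <;> interval_cases tv
    · exact absurd hst (by exact of_decide_eq_false rfl)
    · show (x1 : Fin n) < x2
      exact Fin.lt_def.mpr (by omega)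
    · show (x1 : Fin n) < x3
      exact Fin.lt_def.mpr (by omega)
    · show (x1 : Fin n) < x4
      exact Fin.lt_def.mpr (by omega)
    · show (x1 : Fin n) < x5
      exact Fin.lt_def.mpr (by omega)
    · show (x1 : Fin n) < x6
      exact Fin.lt_def.mpr (by omega)
    · exact absurd hst (by exact of_decide_eq_false rfl)
    · exact absurd hst (by exact of_decide_eq_false rfl)
    · show (x2 : Fin n) < x3
      exact Fin.lt_def.mpr (by omega)
    · show (x2 : Fin n) < x4
      exact Fin.lt_def.mpr (by omega)
    · show (x2 : Fin n) < x5
      exact Fin.lt_def.mpr (by omega)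
    · show (x2 : Fin n) < x6
      exact Fin.lt_def.mpr (by omega)
    · exact absurd hst (by exact of_decide_eq_false rfl)
    · exact absurd hst (by exact of_decide_eq_false rfl)
    · exact absurd hst (by exact of_decide_eq_false rfl)
    · show (x3 : Fin n) < x4
      exact Fin.lt_def.mpr (by omega)
    · show (x3 : Fin n) < x5
      exact Fin.lt_def.mpr (by omega)
    · show (x3 : Fin n) < x6
      exact Fin.lt_def.mpr (by omega)
    · exact absurd hst (by exact of_decide_eq_false rfl)
    · exact absurd hst (by exact of_decide_eq_false rfl)
    · exact absurd hst (by exact of_decide_eq_false rfl)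
    · exact absurd hst (by exact of_decide_eq_false rfl)
    · show (x4 : Fin n) < x5
      exact Fin.lt_def.mpr (by omega)
    · show (x4 : Fin n) < x6
      exact Fin.lt_def.mpr (by omega)
    · exact absurd hst (by exact of_decide_eq_false rfl)
    · exact absurd hst (by exact of_decide_eq_false rfl)
    · exact absurd hst (by exact of_decide_eq_false rfl)
    · exact absurd hst (by exact of_decide_eq_false rfl)
    · exact absurd hst (by exact of_decide_eq_false rfl)
    · show (x5 : Fin n) < x6
      exact Fin.lt_def.mpr (by omega)
    · exact absurd hst (by exact of_decide_eq_false rfl)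
    · exact absurd hst (by exact of_decide_eq_false rfl)
    · exact absurd hst (by exact of_decide_eq_false rfl)
    · exact absurd hst (by exact of_decide_eq_false rfl)
    · exact absurd hst (by exact of_decide_eq_false rfl)
    · exact absurd hst (by exact of_decide_eq_false rfl)
  · intro s t
    obtain ⟨sv, hs⟩ := s; obtain ⟨tv, ht⟩ := t
    have hs' : sv < 6 := hs
    have ht' : tv < 6 := ht
    interval_cases sv <;> interval_cases tv
    · show (6:ℕ) < 6 ↔ w x1 < w x1
      exact iff_of_false (by omega) (fun h => by have := Fin.lt_def.mp h; omega)
    · show (6:ℕ) < 3 ↔ w x1 < w x2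
      exact iff_of_false (by omega) (fun h => by have := Fin.lt_def.mp h; omega)
    · show (6:ℕ) < 2 ↔ w x1 < w x3
      exact iff_of_false (by omega) (fun h => by have := Fin.lt_def.mp h; omega)
    · show (6:ℕ) < 5 ↔ w x1 < w x4
      exact iff_of_false (by omega) (fun h => by have := Fin.lt_def.mp h; omega)
    · show (6:ℕ) < 4 ↔ w x1 < w x5
      exact iff_of_false (by omega) (fun h => by have := Fin.lt_def.mp h; omega)
    · show (6:ℕ) < 1 ↔ w x1 < w x6
      exact iff_of_false (by omega) (fun h => by have := Fin.lt_def.mp h; omega)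
    · show (3:ℕ) < 6 ↔ w x2 < w x1
      exact iff_of_true (by omega) (Fin.lt_def.mpr (by omega))
    · show (3:ℕ) < 3 ↔ w x2 < w x2
      exact iff_of_false (by omega) (fun h => by have := Fin.lt_def.mp h; omega)
    · show (3:ℕ) < 2 ↔ w x2 < w x3
      exact iff_of_false (by omega) (fun h => by have := Fin.lt_def.mp h; omega)
    · show (3:ℕ) < 5 ↔ w x2 < w x4
      exact iff_of_true (by omega) (Fin.lt_def.mpr (by omega))
    · show (3:ℕ) < 4 ↔ w x2 < w x5
      exact iff_of_true (by omega) (Fin.lt_def.mpr (by omega))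
    · show (3:ℕ) < 1 ↔ w x2 < w x6
      exact iff_of_false (by omega) (fun h => by have := Fin.lt_def.mp h; omega)
    · show (2:ℕ) < 6 ↔ w x3 < w x1
      exact iff_of_true (by omega) (Fin.lt_def.mpr (by omega))
    · show (2:ℕ) < 3 ↔ w x3 < w x2
      exact iff_of_true (by omega) (Fin.lt_def.mpr (by omega))
    · show (2:ℕ) < 2 ↔ w x3 < w x3
      exact iff_of_false (by omega) (fun h => by have := Fin.lt_def.mp h; omega)
    · show (2:ℕ) < 5 ↔ w x3 < w x4
      exact iff_of_true (by omega) (Fin.lt_def.mpr (by omega))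
    · show (2:ℕ) < 4 ↔ w x3 < w x5
      exact iff_of_true (by omega) (Fin.lt_def.mpr (by omega))
    · show (2:ℕ) < 1 ↔ w x3 < w x6
      exact iff_of_false (by omega) (fun h => by have := Fin.lt_def.mp h; omega)
    · show (5:ℕ) < 6 ↔ w x4 < w x1
      exact iff_of_true (by omega) (Fin.lt_def.mpr (by omega))
    · show (5:ℕ) < 3 ↔ w x4 < w x2
      exact iff_of_false (by omega) (fun h => by have := Fin.lt_def.mp h; omega)
    · show (5:ℕ) < 2 ↔ w x4 < w x3
      exact iff_of_false (by omega) (fun h => by have := Fin.lt_def.mp h; omega)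
    · show (5:ℕ) < 5 ↔ w x4 < w x4
      exact iff_of_false (by omega) (fun h => by have := Fin.lt_def.mp h; omega)
    · show (5:ℕ) < 4 ↔ w x4 < w x5
      exact iff_of_false (by omega) (fun h => by have := Fin.lt_def.mp h; omega)
    · show (5:ℕ) < 1 ↔ w x4 < w x6
      exact iff_of_false (by omega) (fun h => by have := Fin.lt_def.mp h; omega)
    · show (4:ℕ) < 6 ↔ w x5 < w x1
      exact iff_of_true (by omega) (Fin.lt_def.mpr (by omega))
    · show (4:ℕ) < 3 ↔ w x5 < w x2
      exact iff_of_false (by omega) (fun h => by have := Fin.lt_def.mp h; omega)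
    · show (4:ℕ) < 2 ↔ w x5 < w x3
      exact iff_of_false (by omega) (fun h => by have := Fin.lt_def.mp h; omega)
    · show (4:ℕ) < 5 ↔ w x5 < w x4
      exact iff_of_true (by omega) (Fin.lt_def.mpr (by omega))
    · show (4:ℕ) < 4 ↔ w x5 < w x5
      exact iff_of_false (by omega) (fun h => by have := Fin.lt_def.mp h; omega)
    · show (4:ℕ) < 1 ↔ w x5 < w x6
      exact iff_of_false (by omega) (fun h => by have := Fin.lt_def.mp h; omega)
    · show (1:ℕ) < 6 ↔ w x6 < w x1
      exact iff_of_true (by omega) (Fin.lt_def.mpr (by omega))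
    · show (1:ℕ) < 3 ↔ w x6 < w x2
      exact iff_of_true (by omega) (Fin.lt_def.mpr (by omega))
    · show (1:ℕ) < 2 ↔ w x6 < w x3
      exact iff_of_true (by omega) (Fin.lt_def.mpr (by omega))
    · show (1:ℕ) < 5 ↔ w x6 < w x4
      exact iff_of_true (by omega) (Fin.lt_def.mpr (by omega))
    · show (1:ℕ) < 4 ↔ w x6 < w x5
      exact iff_of_true (by omega) (Fin.lt_def.mpr (by omega))
    · show (1:ℕ) < 1 ↔ w x6 < w x6
      exact iff_of_false (by omega) (fun h => by have := Fin.lt_def.mp h; omega)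

/-- If w avoids 3412, its coessential set has exactly one non-inclusion element,
and w contains 53241 and 52431, then w contains 632541. -/
theorem stmt6 {n : ℕ} (w : Equiv.Perm (Fin n))
    (h1 : ¬ ContainsPat w [3, 4, 1, 2])
    (huniq : ∃! pq : ℕ × ℕ, Coess w pq.1 pq.2 ∧ rank w pq.1 pq.2 < min pq.1 pq.2)
    (h53241 : ContainsPat w [5, 3, 2, 4, 1]) (h52431 : ContainsPat w [5, 2, 4, 3, 1]) :
    ContainsPat w [6, 3, 2, 5, 4, 1] := by
  obtain ⟨a, b, c, d, e, hp1, hp2, hp3, hp4, hv1, hv2, hv3, hv4⟩ := extract53241 w h53241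
  obtain ⟨a2, b2, c2, d2, e2, hq1, hq2, hq3, hq4, hu1, hu2, hu3, hu4⟩ := extract52431 w h52431
  have hav : ∀ i j k m : Fin n, ((i:ℕ) < (j:ℕ) ∧ (j:ℕ) < (k:ℕ) ∧ (k:ℕ) < (m:ℕ) ∧
      (w k:ℕ) < (w m:ℕ) ∧ (w m:ℕ) < (w i:ℕ) ∧ (w i:ℕ) < (w j:ℕ)) → False := by
    intro i j k m ⟨g1, g2, g3, g4, g5, g6⟩
    exact h1 (build3412 w i j k m g1 g2 g3 g4 g5 g6)
  -- bounds
  have hdn := d.isLt; have hwdn := (w d).isLt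
  have hc2n := c2.isLt; have hwd2n := (w d2).isLt
  -- slide for the 53241 occurrence
  obtain ⟨p1, q1, hp1a, hp1b, hq1a, hq1b, hco1⟩ :=
    slide' w ((d:ℕ)+1) ((w d:ℕ)+1) (by omega) (by omega)
      (le_of_eq (pval_coe' w d).symm) (le_of_eq (pval_inv' w d).symm)
      (((d:ℕ)+1) + ((w d:ℕ)+1)) ((c:ℕ)+1) ((w b:ℕ)+1) (by omega) (by omega) (by omega)
      (by omega) (by omega) (by rw [pval_coe']; omega) (by rw [pval_inv']; omega)
  have hrk1 : rank w p1 q1 < min p1 q1 :=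
    rank_lt' w p1 q1 a e (by omega) (by omega) (by omega) (by omega)
  -- slide for the 52431 occurrence
  obtain ⟨p2, q2, hp2a, hp2b, hq2a, hq2b, hco2⟩ :=
    slide' w ((c2:ℕ)+1) ((w d2:ℕ)+1) (by omega) (by omega)
      (by rw [pval_coe']; omega) (by rw [pval_inv']; omega)
      (((c2:ℕ)+1) + ((w d2:ℕ)+1)) ((b2:ℕ)+1) ((w b2:ℕ)+1) (by omega) (by omega) (by omega)
      (by omega) (by omega) (le_of_eq (pval_coe' w b2)) (le_of_eq (pval_inv' w b2))
  have hrk2 : rank w p2 q2 < min p2 q2 :=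
    rank_lt' w p2 q2 a2 e2 (by omega) (by omega) (by omega) (by omega)
  obtain ⟨⟨p, q⟩, _, huni⟩ := huniq
  have ee1 : (p1, q1) = (p, q) := huni (p1, q1) ⟨hco1, hrk1⟩
  have ee2 : (p2, q2) = (p, q) := huni (p2, q2) ⟨hco2, hrk2⟩
  have heq : p1 = p2 ∧ q1 = q2 := by
    have := ee1.trans ee2.symm
    exact ⟨congrArg Prod.fst this, congrArg Prod.snd this⟩
  obtain ⟨hpe, hqe⟩ := heq
  obtain ⟨x1, x2, x3, x4, x5, x6, g1, g2, g3, g4, g5, g6, g7, g8, g9, g10⟩ :=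
    mergeLemma' w hav a b c d e a2 b2 c2 d2 e2 hp1 hp2 hp3 hp4 hv1 hv2 hv3 hv4
      hq1 hq2 hq3 hq4 hu1 hu2 hu3 hu4 (by omega) (by omega) (by omega) (by omega)
  exact build632541 w x1 x2 x3 x4 x5 x6 g1 g2 g3 g4 g5 g6 g7 g8 g9 g10
end

section
/- Every permutation w ∈ S_n containing the pattern 3412 contains a critical 3412 embedding: indices i < j < k < m with w(k) < w(m) < w(i) < w(j) such that the four critical regions {(p,w(p)) | i < p < j, w(m) < w(p) < w(i)}, {(p,w(p)) | j < p < k, w(i) < w(p) < w(j)}, {(p,w(p)) | k < p < m, w(m) < w(p) < w(i)}, and {(p,w(p)) | j < p < k, w(k) < w(p) < w(m)} are all empty. In fact, any 3412 embedding of minimal height, and among those of minimal amplitude, is critical. -/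
open Equiv

lemma minCrit {n : ℕ} (w : Equiv.Perm (Fin n)) (i j k m : Fin n)
    (h : MinHtAmp w i j k m) : Critical w i j k m := by
  obtain ⟨⟨he, hmin⟩, hamp⟩ := h
  obtain ⟨hij, hjk, hkm, hwkm, hwmi, hwij⟩ := he
  refine ⟨⟨hij, hjk, hkm, hwkm, hwmi, hwij⟩, ?_, ?_, ?_, ?_⟩
  · intro p hip hpj hc
    obtain ⟨hmp, hpi⟩ := hc
    have h1 : Emb3412 w p j k m := ⟨hpj, hjk, hkm, hwkm, hmp, hpi.trans hwij⟩
    have h2 := hmin p j k m h1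
    have e1 : (w m : ℕ) < w p := hmp
    have e2 : (w p : ℕ) < w i := hpi
    simp only [hgt] at h2
    omega
  · intro p hjp hpk hc
    obtain ⟨hip, hpj⟩ := hc
    have h1 : Emb3412 w i p k m := ⟨hij.trans hjp, hpk, hkm, hwkm, hwmi, hip⟩
    have h2 := hamp i p k m h1 rfl
    have e1 : (w k : ℕ) < w j := hwkm.trans (hwmi.trans hwij)
    have e2 : (w p : ℕ) < w j := hpj
    have e3 : (w k : ℕ) < w p := hwkm.trans (hwmi.trans hip)
    simp only [amp] at h2
    omega
  · intro p hkp hpm hc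
    obtain ⟨hmp, hpi⟩ := hc
    have h1 : Emb3412 w i j k p := ⟨hij, hjk, hkp, hwkm.trans hmp, hpi, hwij⟩
    have h2 := hmin i j k p h1
    have e1 : (w m : ℕ) < w p := hmp
    have e2 : (w p : ℕ) < w i := hpi
    have e3 : (w m : ℕ) < w i := hwmi
    simp only [hgt] at h2
    omega
  · intro p hjp hpk hc
    obtain ⟨hkp, hpm⟩ := hc
    have h1 : Emb3412 w i j p m := ⟨hij, hjp, hpk.trans hkm, hpm, hwmi, hwij⟩
    have h2 := hamp i j p m h1 rfl
    have e1 : (w k : ℕ) < w p := hkp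
    have e2 : (w k : ℕ) < w j := hwkm.trans (hwmi.trans hwij)
    have e3 : (w p : ℕ) < w j := (hpm.trans hwmi).trans hwij
    simp only [amp] at h2
    omega

/-- Every permutation containing 3412 contains a critical 3412 embedding; in fact
any 3412 embedding of minimal height and, among those, minimal amplitude is critical. -/
theorem stmt7 {n : ℕ} (w : Equiv.Perm (Fin n)) :
    (ContainsPat w [3, 4, 1, 2] → ∃ i j k m, Critical w i j k m) ∧
    (∀ i j k m, MinHtAmp w i j k m → Critical w i j k m) := by
  constructor
  · intro hc
    obtain ⟨f, hf, hrel⟩ := hc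
    let a0 : Fin ([3,4,1,2] : List ℕ).length := ⟨0, by decide⟩
    let a1 : Fin ([3,4,1,2] : List ℕ).length := ⟨1, by decide⟩
    let a2 : Fin ([3,4,1,2] : List ℕ).length := ⟨2, by decide⟩
    let a3 : Fin ([3,4,1,2] : List ℕ).length := ⟨3, by decide⟩
    have he : Emb3412 w (f a0) (f a1) (f a2) (f a3) := by
      refine ⟨hf (by decide), hf (by decide), hf (by decide),
        (hrel a2 a3).mp (by decide), (hrel a3 a0).mp (by decide),
        (hrel a0 a1).mp (by decide)⟩
    classical
    let S : Finset (Fin n × Fin n × Fin n × Fin n) :=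
      Finset.univ.filter fun q => Emb3412 w q.1 q.2.1 q.2.2.1 q.2.2.2
    have hS : S.Nonempty := ⟨(f a0, f a1, f a2, f a3), by simp [S, he]⟩
    obtain ⟨q0, hq0, hq0min⟩ := S.exists_min_image (fun q => hgt w q.1 q.2.2.2) hS
    have hq0' : Emb3412 w q0.1 q0.2.1 q0.2.2.1 q0.2.2.2 := by
      simpa [S] using hq0
    let S' : Finset (Fin n × Fin n × Fin n × Fin n) :=
      S.filter fun q => hgt w q.1 q.2.2.2 = hgt w q0.1 q0.2.2.2
    have hS' : S'.Nonempty := ⟨q0, by simp [S', hq0]⟩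
    obtain ⟨q, hq, hqmin⟩ := S'.exists_min_image (fun q => amp w q.2.1 q.2.2.1) hS'
    have hqE : Emb3412 w q.1 q.2.1 q.2.2.1 q.2.2.2 := by
      have := (Finset.mem_filter.mp hq).1
      simpa [S] using this
    have hqH : hgt w q.1 q.2.2.2 = hgt w q0.1 q0.2.2.2 :=
      (Finset.mem_filter.mp hq).2
    refine ⟨q.1, q.2.1, q.2.2.1, q.2.2.2, minCrit w _ _ _ _ ⟨⟨hqE, ?_⟩, ?_⟩⟩
    · intro i' j' k' m' h'
      have := hq0min (i', j', k', m') (by simp [S, h'])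
      simpa [hqH] using this
    · intro i' j' k' m' h' hh
      exact hqmin (i', j', k', m')
        (by simp only [S', S, Finset.mem_filter, Finset.mem_univ, true_and]
            exact ⟨h', by rw [hh, hqH]⟩)
  · intro i j k m h
    exact minCrit w i j k m h
end

section
/- Let a < b < c < d be a 3412 embedding in w ∈ S_n (so w(c) < w(d) < w(a) < w(b)) of minimal height among all 3412 embeddings in w, and of minimal amplitude among those of minimal height. Then there is no index p with a < p < c and w(a) < w(p) < w(b), and no index p with b < p < d and w(c) < w(p) < w(d). -/
open Equiv

/-- For a minimal-height, minimal-amplitude 3412 embedding a<b<c<d, there is no p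
with a<p<c and w(a)<w(p)<w(b), and no p with b<p<d and w(c)<w(p)<w(d). -/
theorem stmt8 {n : ℕ} (w : Equiv.Perm (Fin n)) (a b c d : Fin n)
    (h : MinHtAmp w a b c d) :
    (∀ p, a < p → p < c → ¬(w a < w p ∧ w p < w b)) ∧
    (∀ p, b < p → p < d → ¬(w c < w p ∧ w p < w d)) := by
  obtain ⟨⟨he, _⟩, hamp⟩ := h
  obtain ⟨hab, hbc, hcd, hwcd, hwda, hwab⟩ := he
  constructor
  · rintro p hap hpc ⟨h1, h2⟩
    have hemb : Emb3412 w a p c d := ⟨hap, hpc, hcd, hwcd, hwda, h1⟩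
    have hle := hamp a p c d hemb rfl
    have hcp : w c < w p := lt_trans hwcd (lt_trans hwda h1)
    simp only [amp] at hle
    have h2' := Fin.lt_iff_val_lt_val.mp h2
    have hcp' := Fin.lt_iff_val_lt_val.mp hcp
    have hcb := Fin.lt_iff_val_lt_val.mp (lt_trans hcp h2)
    omega
  · rintro p hbp hpd ⟨h1, h2⟩
    have hemb : Emb3412 w a b p d := ⟨hab, hbp, hpd, h2, hwda, hwab⟩
    have hle := hamp a b p d hemb rfl
    have hpb : w p < w b := lt_trans h2 (lt_trans hwda hwab)
    simp only [amp] at hle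
    have h1' := Fin.lt_iff_val_lt_val.mp h1
    have hpb' := Fin.lt_iff_val_lt_val.mp hpb
    have hcb := Fin.lt_iff_val_lt_val.mp (lt_trans h1 hpb)
    omega
end

section
/- Let a < b < c < d be a 3412 embedding in w ∈ S_n of minimal height h = w(a) − w(d). Then for every value t with w(d) < t < w(a), the index w^{-1}(t) satisfies b < w^{-1}(t) < c, and moreover b < w^{-1}(w(a)-1) < w^{-1}(w(a)-2) < ⋯ < w^{-1}(w(d)+1) < c. -/
open Equiv

/-- For a minimal-height 3412 embedding a<b<c<d: every value t with w(d)<t<w(a)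
has b < w⁻¹(t) < c, and the positions of these values are decreasing in t. -/
theorem stmt9 {n : ℕ} (w : Equiv.Perm (Fin n)) (a b c d : Fin n)
    (h : MinHt w a b c d) :
    (∀ t : Fin n, w d < t → t < w a → b < w⁻¹ t ∧ w⁻¹ t < c) ∧
    (∀ t t' : Fin n, w d < t → t < t' → t' < w a → w⁻¹ t' < w⁻¹ t) := by
  obtain ⟨⟨hab, hbc, hcd, hcdv, hdav, habv⟩, hmin⟩ := h
  have key : ∀ t : Fin n, w d < t → t < w a → b < w⁻¹ t ∧ w⁻¹ t < c := by
    intro t hdt hta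
    have hwt : w (w⁻¹ t) = t := Equiv.apply_symm_apply w t
    constructor
    · by_contra hle
      push_neg at hle
      have hne : w⁻¹ t ≠ b := by
        intro h'
        rw [h'] at hwt
        exact absurd (hwt ▸ (hta.trans habv)) (lt_irrefl _)
      have hlt : w⁻¹ t < b := lt_of_le_of_ne hle hne
      have hembp : Emb3412 w (w⁻¹ t) b c d :=
        ⟨hlt, hbc, hcd, hcdv, by rw [hwt]; exact hdt, by rw [hwt]; exact hta.trans habv⟩
      have hm := hmin _ _ _ _ hembp
      simp only [hgt, hwt] at hm
      have h1 : (w d : ℕ) < (t : ℕ) := hdt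
      have h2 : (t : ℕ) < (w a : ℕ) := hta
      omega
    · by_contra hle
      push_neg at hle
      have hne : w⁻¹ t ≠ c := by
        intro h'
        rw [h'] at hwt
        exact absurd (hwt ▸ (hcdv.trans hdt)) (lt_irrefl _)
      have hlt : c < w⁻¹ t := lt_of_le_of_ne hle (Ne.symm hne)
      have hembp : Emb3412 w a b c (w⁻¹ t) :=
        ⟨hab, hbc, hlt, by rw [hwt]; exact hcdv.trans hdt, by rw [hwt]; exact hta, habv⟩
      have hm := hmin _ _ _ _ hembp
      simp only [hgt, hwt] at hm
      have h1 : (w d : ℕ) < (t : ℕ) := hdt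
      have h2 : (t : ℕ) < (w a : ℕ) := hta
      omega
  refine ⟨key, ?_⟩
  intro t t' hdt htt' hta
  have hdt' : w d < t' := hdt.trans htt'
  have hta' : t < w a := htt'.trans hta
  obtain ⟨hb1, hc1⟩ := key t hdt hta'
  obtain ⟨hb2, hc2⟩ := key t' hdt' hta
  have hwt : w (w⁻¹ t) = t := Equiv.apply_symm_apply w t
  have hwt' : w (w⁻¹ t') = t' := Equiv.apply_symm_apply w t'
  by_contra hle
  push_neg at hle
  have hne : w⁻¹ t ≠ w⁻¹ t' := by
    intro h'
    rw [h'] at hwt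
    rw [hwt] at hwt'
    exact absurd (hwt' ▸ htt') (lt_irrefl _)
  have hlt : w⁻¹ t < w⁻¹ t' := lt_of_le_of_ne hle hne
  have hembp : Emb3412 w (w⁻¹ t) (w⁻¹ t') c d :=
    ⟨hlt, hc2, hcd, hcdv, by rw [hwt]; exact hdt, by rw [hwt, hwt']; exact htt'⟩
  have hm := hmin _ _ _ _ hembp
  simp only [hgt, hwt] at hm
  have h1 : (w d : ℕ) < (t : ℕ) := hdt
  have h2 : (t : ℕ) < (w a : ℕ) := hta'
  omega
end

section
/- Let w ∈ S_n, let q_1 < q_2 be values with w^{-1}(q_2) < w^{-1}(q_1), and let t be the transposition swapping q_1 and q_2, u = t∘w. Then r_u(p,q) = r_w(p,q) + 1 if w^{-1}(q_2) ≤ p < w^{-1}(q_1) and q_1 ≤ q < q_2, and r_u(p,q) = r_w(p,q) otherwise. -/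
open Equiv

private lemma card_split {α : Type*} [DecidableEq α] (s : Finset α) (a b : α) (hab : a ≠ b) :
    s.card = ((s.erase a).erase b).card
      + (if a ∈ s then 1 else 0) + (if b ∈ s then 1 else 0) := by
  by_cases ha : a ∈ s <;> by_cases hb : b ∈ s
  · have hb' : b ∈ s.erase a := Finset.mem_erase.2 ⟨hab.symm, hb⟩
    have h1 := Finset.card_erase_of_mem hb'
    have h2 := Finset.card_erase_of_mem ha
    have h3 : 1 ≤ (s.erase a).card := Finset.card_pos.2 ⟨b, hb'⟩
    simp only [ha, hb, if_pos]
    omega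
  · have hb' : b ∉ s.erase a := fun h => hb (Finset.mem_of_mem_erase h)
    rw [Finset.erase_eq_of_notMem hb', Finset.card_erase_of_mem ha]
    have h3 : 1 ≤ s.card := Finset.card_pos.2 ⟨a, ha⟩
    simp only [if_pos ha, if_neg hb]
    omega
  · have hb' : b ∈ s.erase a := Finset.mem_erase.2 ⟨hab.symm, hb⟩
    rw [Finset.erase_eq_of_notMem ha, Finset.card_erase_of_mem hb]
    have h3 : 1 ≤ s.card := Finset.card_pos.2 ⟨b, hb⟩
    simp only [if_pos hb, if_neg ha]
    omega
  · have hb' : b ∉ s.erase a := fun h => hb (Finset.mem_of_mem_erase h)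
    rw [Finset.erase_eq_of_notMem ha, Finset.erase_eq_of_notMem hb]
    simp [ha, hb]

/-- Effect on the rank function of multiplying by a value transposition t = (q1 q2). -/
theorem stmt10 {n : ℕ} (w : Equiv.Perm (Fin n)) (q1 q2 : Fin n) (hq : q1 < q2)
    (hpos : w⁻¹ q2 < w⁻¹ q1) (u : Equiv.Perm (Fin n)) (hu : u = Equiv.swap q1 q2 * w)
    (p q : ℕ) :
    (((w⁻¹ q2 : ℕ) + 1 ≤ p ∧ p < (w⁻¹ q1 : ℕ) + 1 ∧
        (q1 : ℕ) + 1 ≤ q ∧ q < (q2 : ℕ) + 1) →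
      rank u p q = rank w p q + 1) ∧
    (¬((w⁻¹ q2 : ℕ) + 1 ≤ p ∧ p < (w⁻¹ q1 : ℕ) + 1 ∧
        (q1 : ℕ) + 1 ≤ q ∧ q < (q2 : ℕ) + 1) →
      rank u p q = rank w p q) := by
  subst hu
  have hq' : (q1 : ℕ) < q2 := hq
  have hpos' : ((w⁻¹ q2 : Fin n) : ℕ) < ((w⁻¹ q1 : Fin n) : ℕ) := hpos
  set a : Fin n := w⁻¹ q1 with ha
  set b : Fin n := w⁻¹ q2 with hb
  have hab : a ≠ b := by
    intro h; rw [h] at hpos'; omega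
  have hwa : w a = q1 := w.apply_symm_apply q1
  have hwb : w b = q2 := w.apply_symm_apply q2
  have hua : (Equiv.swap q1 q2 * w) a = q2 := by
    simp [Equiv.Perm.mul_apply, hwa, Equiv.swap_apply_left]
  have hub : (Equiv.swap q1 q2 * w) b = q1 := by
    simp [Equiv.Perm.mul_apply, hwb, Equiv.swap_apply_right]
  have hother : ∀ i : Fin n, i ≠ a → i ≠ b → (Equiv.swap q1 q2 * w) i = w i := by
    intro i hia hib
    have h1 : w i ≠ q1 := fun h => hia (by rw [ha, ← h, Equiv.Perm.inv_eq_iff_eq.2 rfl])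
    have h2 : w i ≠ q2 := fun h => hib (by rw [hb, ← h, Equiv.Perm.inv_eq_iff_eq.2 rfl])
    simp [Equiv.Perm.mul_apply, Equiv.swap_apply_of_ne_of_ne h1 h2]
  set Su := Finset.univ.filter
    (fun i : Fin n => (i : ℕ) + 1 ≤ p ∧ (((Equiv.swap q1 q2 * w) i : Fin n) : ℕ) + 1 ≤ q)
    with hSu
  set Sw := Finset.univ.filter
    (fun i : Fin n => (i : ℕ) + 1 ≤ p ∧ ((w i : Fin n) : ℕ) + 1 ≤ q) with hSw
  have hsame : (Su.erase a).erase b = (Sw.erase a).erase b := by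
    ext i
    simp only [Finset.mem_erase, hSu, hSw, Finset.mem_filter, Finset.mem_univ, true_and]
    constructor
    · rintro ⟨hib, hia, h1, h2⟩
      rw [hother i hia hib] at h2
      exact ⟨hib, hia, h1, h2⟩
    · rintro ⟨hib, hia, h1, h2⟩
      rw [← hother i hia hib] at h2
      exact ⟨hib, hia, h1, h2⟩
  have hmemSu_a : a ∈ Su ↔ ((a : ℕ) + 1 ≤ p ∧ (q2 : ℕ) + 1 ≤ q) := by
    simp [hSu, Equiv.Perm.mul_apply, hwa, Equiv.swap_apply_left]
  have hmemSu_b : b ∈ Su ↔ ((b : ℕ) + 1 ≤ p ∧ (q1 : ℕ) + 1 ≤ q) := by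
    simp [hSu, Equiv.Perm.mul_apply, hwb, Equiv.swap_apply_right]
  have hmemSw_a : a ∈ Sw ↔ ((a : ℕ) + 1 ≤ p ∧ (q1 : ℕ) + 1 ≤ q) := by
    simp [hSw, hwa]
  have hmemSw_b : b ∈ Sw ↔ ((b : ℕ) + 1 ≤ p ∧ (q2 : ℕ) + 1 ≤ q) := by
    simp [hSw, hwb]
  have hru : rank (Equiv.swap q1 q2 * w) p q = ((Su.erase a).erase b).card
      + (if a ∈ Su then 1 else 0) + (if b ∈ Su then 1 else 0) := card_split Su a b hab
  have hrw : rank w p q = ((Sw.erase a).erase b).card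
      + (if a ∈ Sw then 1 else 0) + (if b ∈ Sw then 1 else 0) := card_split Sw a b hab
  rw [hru, hrw, hsame]
  simp only [hmemSu_a, hmemSu_b, hmemSw_a, hmemSw_b]
  constructor
  · intro h
    split_ifs <;> omega
  · intro h
    split_ifs <;> omega
end

section
/- Let i < j < k < m be a critical 3412 embedding in w ∈ S_n, and let B = {p | j < p < k, w(m) < w(p) < w(i)}. If the embedding is not reduced, i.e., there exist b_1 < b_2 in B with w(b_1) < w(b_2), then there exists a critical 3412 embedding in w of the form i < j < b_1' < b_2' with b_1', b_2' ∈ B, and also one of the form b_1'' < b_2'' < k < m with b_1'', b_2'' ∈ B. -/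
open Equiv

/-- A non-reduced critical 3412 embedding contains critical 3412 embeddings
i < j < b1' < b2' and b1'' < b2'' < k < m with the b's in the region B. -/
theorem stmt15 {n : ℕ} (w : Equiv.Perm (Fin n)) (i j k m : Fin n)
    (h : Critical w i j k m)
    (b1 b2 : Fin n) (hb1 : j < b1) (h12 : b1 < b2) (hb2 : b2 < k)
    (hv1 : w m < w b1) (hv1' : w b1 < w i) (hv2 : w m < w b2) (hv2' : w b2 < w i)
    (hnr : w b1 < w b2) :
    (∃ b1' b2' : Fin n, j < b1' ∧ b1' < b2' ∧ b2' < k ∧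
      w m < w b1' ∧ w b1' < w i ∧ w m < w b2' ∧ w b2' < w i ∧
      Critical w i j b1' b2') ∧
    (∃ b1'' b2'' : Fin n, j < b1'' ∧ b1'' < b2'' ∧ b2'' < k ∧
      w m < w b1'' ∧ w b1'' < w i ∧ w m < w b2'' ∧ w b2'' < w i ∧
      Critical w b1'' b2'' k m) := by
  obtain ⟨⟨hij, hjk, hkm, hwkm, hwmi, hwij⟩, hc1, hc2, hc3, hc4⟩ := h
  constructor
  · -- first embedding: maximize
    set S : Finset (Fin n) := Finset.univ.filter
      (fun b : Fin n => j < b ∧ b < k ∧ w m < w b ∧ w b < w i ∧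
        ∃ a : Fin n, j < a ∧ a < b ∧ w m < w a ∧ w a < w i ∧ w a < w b) with hS
    have hSne : S.Nonempty := ⟨b2, by
      simp only [hS, Finset.mem_filter, Finset.mem_univ, true_and]
      exact ⟨lt_trans hb1 h12, hb2, hv2, hv2', b1, hb1, h12, hv1, hv1', hnr⟩⟩
    obtain ⟨b', hb'S, hbmax⟩ := S.exists_max_image (fun b => w b) hSne
    simp only [hS, Finset.mem_filter, Finset.mem_univ, true_and] at hb'S
    obtain ⟨hjb', hb'k, hwmb', hwb'i, a0, ha0⟩ := hb'S
    set T : Finset (Fin n) := Finset.univ.filter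
      (fun a : Fin n => j < a ∧ a < b' ∧ w m < w a ∧ w a < w i ∧ w a < w b') with hT
    have hTne : T.Nonempty := ⟨a0, by
      simp only [hT, Finset.mem_filter, Finset.mem_univ, true_and]; exact ha0⟩
    obtain ⟨a', ha'T, hamax⟩ := T.exists_max_image (fun a => w a) hTne
    simp only [hT, Finset.mem_filter, Finset.mem_univ, true_and] at ha'T
    obtain ⟨hja', ha'b', hwma', hwa'i, hwa'b'⟩ := ha'T
    refine ⟨a', b', hja', ha'b', hb'k, hwma', hwa'i, hwmb', hwb'i,
      ⟨hij, hja', ha'b', hwa'b', hwb'i, hwij⟩, ?_, ?_, ?_, ?_⟩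
    · intro p hp1 hp2 ⟨h1, h2⟩
      exact hc1 p hp1 hp2 ⟨lt_trans hwmb' h1, h2⟩
    · intro p hp1 hp2 ⟨h1, h2⟩
      exact hc2 p hp1 (lt_trans hp2 (lt_trans ha'b' hb'k)) ⟨h1, h2⟩
    · intro p hp1 hp2 ⟨h1, h2⟩
      have hpS : p ∈ S := by
        simp only [hS, Finset.mem_filter, Finset.mem_univ, true_and]
        exact ⟨lt_trans hja' hp1, lt_trans hp2 hb'k, lt_trans hwmb' h1, h2,
          a', hja', hp1, hwma', hwa'i, lt_trans hwa'b' h1⟩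
      exact absurd (hbmax p hpS) (not_le.mpr h1)
    · intro p hp1 hp2 ⟨h1, h2⟩
      have hpT : p ∈ T := by
        simp only [hT, Finset.mem_filter, Finset.mem_univ, true_and]
        exact ⟨hp1, lt_trans hp2 ha'b', lt_trans hwma' h1,
          lt_trans h2 hwb'i, h2⟩
      exact absurd (hamax p hpT) (not_le.mpr h1)
  · -- second embedding: minimize
    set S : Finset (Fin n) := Finset.univ.filter
      (fun a : Fin n => j < a ∧ a < k ∧ w m < w a ∧ w a < w i ∧
        ∃ b : Fin n, a < b ∧ b < k ∧ w m < w b ∧ w b < w i ∧ w a < w b) with hS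
    have hSne : S.Nonempty := ⟨b1, by
      simp only [hS, Finset.mem_filter, Finset.mem_univ, true_and]
      exact ⟨hb1, lt_trans h12 hb2, hv1, hv1', b2, h12, hb2, hv2, hv2', hnr⟩⟩
    obtain ⟨a', ha'S, hamin⟩ := S.exists_min_image (fun a => w a) hSne
    simp only [hS, Finset.mem_filter, Finset.mem_univ, true_and] at ha'S
    obtain ⟨hja', ha'k, hwma', hwa'i, b0, hb0⟩ := ha'S
    set T : Finset (Fin n) := Finset.univ.filter
      (fun b : Fin n => a' < b ∧ b < k ∧ w m < w b ∧ w b < w i ∧ w a' < w b) with hT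
    have hTne : T.Nonempty := ⟨b0, by
      simp only [hT, Finset.mem_filter, Finset.mem_univ, true_and]; exact hb0⟩
    obtain ⟨b', hb'T, hbmin⟩ := T.exists_min_image (fun b => w b) hTne
    simp only [hT, Finset.mem_filter, Finset.mem_univ, true_and] at hb'T
    obtain ⟨ha'b', hb'k, hwmb', hwb'i, hwa'b'⟩ := hb'T
    refine ⟨a', b', hja', ha'b', hb'k, hwma', hwa'i, hwmb', hwb'i,
      ⟨ha'b', hb'k, hkm, hwkm, hwma', hwa'b'⟩, ?_, ?_, ?_, ?_⟩
    · intro p hp1 hp2 ⟨h1, h2⟩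
      have hpS : p ∈ S := by
        simp only [hS, Finset.mem_filter, Finset.mem_univ, true_and]
        exact ⟨lt_trans hja' hp1, lt_trans hp2 hb'k, h1, lt_trans h2 hwa'i,
          b', hp2, hb'k, hwmb', hwb'i, lt_trans h2 hwa'b'⟩
      exact absurd (hamin p hpS) (not_le.mpr h2)
    · intro p hp1 hp2 ⟨h1, h2⟩
      have hpT : p ∈ T := by
        simp only [hT, Finset.mem_filter, Finset.mem_univ, true_and]
        exact ⟨lt_trans ha'b' hp1, hp2, lt_trans hwma' h1,
          lt_trans h2 hwb'i, h1⟩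
      exact absurd (hbmin p hpT) (not_le.mpr h2)
    · intro p hp1 hp2 ⟨h1, h2⟩
      exact hc3 p hp1 hp2 ⟨h1, lt_trans h2 hwa'i⟩
    · intro p hp1 hp2 ⟨h1, h2⟩
      exact hc4 p (lt_trans (lt_trans hja' ha'b') hp1) hp2 ⟨h1, h2⟩
end

section
/- Let w ∈ S_n contain a 3412 embedding and let a < b < c < d be one of minimal height h = w(a) − w(d) and, among those, minimal amplitude. Suppose h > 1 and w avoids 526413. Then there is no index p with a < p < b and w(c) < w(p) < δ', where δ' is the smallest value such that w^{-1}(w(d)) < w^{-1}(w(d)−1) < ⋯ < w^{-1}(δ'). -/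
open Equiv

def pick526413 {α : Type*} (x0 x1 x2 x3 x4 x5 : α) : Fin 6 → α
  | ⟨0,_⟩ => x0 | ⟨1,_⟩ => x1 | ⟨2,_⟩ => x2 | ⟨3,_⟩ => x3 | ⟨4,_⟩ => x4 | ⟨5,_⟩ => x5

lemma contains526413 {n : ℕ} (w : Equiv.Perm (Fin n)) (a p b e c t : Fin n)
    (h1 : (a:ℕ) < p) (h2 : (p:ℕ) < b) (h3 : (b:ℕ) < e) (h4 : (e:ℕ) < c) (h5 : (c:ℕ) < t)
    (v1 : (w c : ℕ) < w p) (v2 : (w p : ℕ) < w t) (v3 : (w t : ℕ) < w e)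
    (v4 : (w e : ℕ) < w a) (v5 : (w a : ℕ) < w b) :
    ContainsPat w [5,2,6,4,1,3] := by
  refine ⟨pick526413 a p b e c t, ?_, ?_⟩
  · intro i j hij
    obtain ⟨iv, hi⟩ := i; obtain ⟨jv, hj⟩ := j
    have hij' : iv < jv := hij
    have hi6 : iv < 6 := hi
    have hj6 : jv < 6 := hj
    interval_cases iv <;> interval_cases jv <;>
      simp only [pick526413] <;> (rw [Fin.lt_def]; omega)
  · intro j k
    obtain ⟨jv, hj⟩ := j; obtain ⟨kv, hk⟩ := k
    have hj6 : jv < 6 := hj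
    have hk6 : kv < 6 := hk
    interval_cases jv <;> interval_cases kv <;>
      simp only [pick526413, List.get, Fin.lt_def] <;> omega

/-- For a minimal-height, minimal-amplitude 3412 embedding a<b<c<d with h > 1 in a
permutation avoiding 526413, there is no p with a < p < b and w(c) < w(p) < δ'. -/
theorem stmt19 {n : ℕ} (w : Equiv.Perm (Fin n)) (a b c d : Fin n)
    (h : MinHtAmp w a b c d)
    (hh : 1 < (w a : ℕ) - (w d : ℕ))
    (hav : ¬ ContainsPat w [5, 2, 6, 4, 1, 3])
    (dlt' : ℕ) (hdle : dlt' ≤ (w d : ℕ))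
    (hchain : ∀ s t : Fin n, dlt' ≤ (w t : ℕ) → (w s : ℕ) = (w t : ℕ) + 1 →
      (w s : ℕ) ≤ (w d : ℕ) → s < t)
    (hmin : dlt' = 0 ∨ ∀ s t : Fin n, (w s : ℕ) = dlt' - 1 → (w t : ℕ) = dlt' → s < t) :
    ∀ p : Fin n, a < p → p < b → ¬((w c : ℕ) < (w p : ℕ) ∧ (w p : ℕ) < dlt') := by

  intro p hap hpb hcon
  obtain ⟨hcp, hpd⟩ := hcon
  obtain ⟨⟨hemb, hminh⟩, _⟩ := h
  obtain ⟨hab, hbc, hcd, hcd', hda, hab'⟩ := hemb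
  -- basic numeric facts
  have hA : (w a : ℕ) < n := (w a).isLt
  have hDA : (w d : ℕ) + 2 ≤ (w a : ℕ) := by omega
  have hwcd : (w c : ℕ) < (w d : ℕ) := hcd'
  have hwda : (w d : ℕ) < (w a : ℕ) := hda
  have hwab : (w a : ℕ) < (w b : ℕ) := hab'
  have hE : (w d : ℕ) + 1 < n := by omega
  have hT : dlt' < n := by omega
  -- chain: d ≤ position of any value in [dlt', w d]
  have key : ∀ k : ℕ, ∀ v : Fin n, (w d : ℕ) = (v : ℕ) + k → dlt' ≤ (v : ℕ) →
      (d : ℕ) ≤ ((w.symm v : Fin n) : ℕ) := by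
    intro k
    induction k with
    | zero =>
      intro v hv _
      have h0 : v = w d := by apply Fin.ext; omega
      rw [h0, Equiv.symm_apply_apply]
    | succ k ih =>
      intro v hv hdv
      have hv1 : (v : ℕ) + 1 < n := by omega
      have h1 := ih ⟨(v : ℕ) + 1, hv1⟩ (by simp; omega) (by simp; omega)
      have hst : w.symm ⟨(v : ℕ) + 1, hv1⟩ < w.symm v := by
        apply hchain <;> simp <;> omega
      have h2 : ((w.symm ⟨(v : ℕ) + 1, hv1⟩ : Fin n) : ℕ) < ((w.symm v : Fin n) : ℕ) := hst
      omega
  obtain ⟨e, hwe⟩ : ∃ e : Fin n, (w e : ℕ) = (w d : ℕ) + 1 :=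
    ⟨w.symm ⟨(w d : ℕ) + 1, hE⟩, by simp⟩
  obtain ⟨t, hwt, hdt⟩ : ∃ t : Fin n, (w t : ℕ) = dlt' ∧ (d : ℕ) ≤ (t : ℕ) :=
    ⟨w.symm ⟨dlt', hT⟩, by simp, key ((w d : ℕ) - dlt') ⟨dlt', hT⟩ (by simp; omega) (by simp)⟩
  have hct : (c : ℕ) < (t : ℕ) := by
    have h1 : (c : ℕ) < (d : ℕ) := hcd
    omega
  -- e is strictly between b and c
  have hbe : b < e := by
    rcases lt_trichotomy e b with h1 | h1 | h1
    · exfalso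
      have hemb2 : Emb3412 w e b c d := by
        refine ⟨h1, hbc, hcd, hcd', ?_, ?_⟩
        · show (w d : ℕ) < (w e : ℕ); omega
        · show (w e : ℕ) < (w b : ℕ); omega
      have h2 := hminh e b c d hemb2
      unfold hgt at h2
      omega
    · exfalso
      have h2 : (w e : ℕ) = (w b : ℕ) := by rw [h1]
      omega
    · exact h1
  have hec : e < c := by
    rcases lt_trichotomy e c with h1 | h1 | h1
    · exact h1
    · exfalso
      have h2 : (w e : ℕ) = (w c : ℕ) := by rw [h1]
      omega
    · exfalso
      have hemb2 : Emb3412 w a b c e := by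
        refine ⟨hab, hbc, h1, ?_, ?_, hab'⟩
        · show (w c : ℕ) < (w e : ℕ); omega
        · show (w e : ℕ) < (w a : ℕ); omega
      have h2 := hminh a b c e hemb2
      unfold hgt at h2
      omega
  -- build the 526413 pattern
  apply hav
  exact contains526413 w a p b e c t hap hpb hbe hec hct
    hcp (by omega) (by omega) (by omega) (by omega)
end
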